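/- arXiv:2511.23257 — 12 statements merged into one kernel-verified Lean document; each statement's English description precedes it below -/
import Mathlib

section
/- Let n ≥ 1 and let T be an (n+1)×(n+1) complex Hermitian positive semidefinite Toeplitz matrix (i.e. T_{jk} = c_{j-k} for 0 ≤ j,k ≤ n, where c_{-m} = conj(c_m)). Assume T has rank n, and let ξ = (ξ_0, …, ξ_n) be a nonzero vector in the kernel of T. Then every complex root z of the polynomial P(z) = Σ_{j=0}^n ξ_j z^j satisfies |z| = 1. -/
/-!
Divide `P` by `X - z`: `P = (X - z) Q`. With `a` the coefficient vector of `Q` (so `a n = 0`) and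
`b` its shift `(0, a 0, …, a (n - 1))`, this reads `ξ = b - z a`. Since `T` is Toeplitz the
quadratic form is shift invariant, `b* T b = a* T a`, while `T ξ = 0` gives `T b = z T a` and hence
`b* T b = |z|² a* T a`. So `|z| = 1` unless `a* T a = 0`; but then `T a = T b = 0` by positive
semidefiniteness, and the one-dimensional kernel would contain `a` and its shift `b`, which is
never a multiple of `a`.
-/

open scoped ComplexOrder

open Matrix

open Polynomial in
theorem exists_eq_cons_zero_init_sub_smul {R : Type*} [CommRing R] {n : ℕ} {ξ : Fin (n + 1) → R}
    {z : R} (hz : ∑ j : Fin (n + 1), ξ j * z ^ (j : ℕ) = 0) :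
    ∃ a : Fin (n + 1) → R, a (Fin.last n) = 0 ∧ ξ = Fin.cons 0 (Fin.init a) - z • a := by
  classical
  set P := ofFn (n + 1) ξ
  have hroot : P.IsRoot z := by
    simpa [P, ofFn_eq_sum_monomial, eval_finsetSum, ← C_mul_X_pow_eq_monomial] using hz
  set Q := P /ₘ (X - C z)
  have hPQ : (X - C z) * Q = P := mul_divByMonic_eq_iff_isRoot.mpr hroot
  have hQ : Q.coeff (n + 1) = 0 := by
    refine coeff_eq_zero_of_natDegree_lt (lt_of_le_of_lt ?_ (ofFn_natDegree_lt n.succ_pos ξ))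
    exact (natDegree_divByMonic P (monic_X_sub_C z)).trans_le tsub_le_self
  refine ⟨fun j => Q.coeff j, ?_, ?_⟩
  · have h := congrArg (coeff · (n + 1)) hPQ
    simp only [coeff_X_sub_C_mul, hQ, mul_zero, sub_zero] at h
    simpa [P] using h
  · ext j
    have h := congrArg (coeff · j) hPQ
    simp only [P, ofFn_coeff_eq_val_of_lt _ j.isLt, Fin.eta] at h
    cases j using Fin.cases with
    | zero => simpa using h.symm
    | succ i =>
      rw [Fin.val_succ, coeff_X_sub_C_mul] at h
      simpa [Fin.init] using h.symm

theorem dotProduct_mulVec_cons_zero_init {R : Type*} [NonUnitalNonAssocSemiring R] {n : ℕ}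
    {T : Matrix (Fin (n + 1)) (Fin (n + 1)) R}
    (hT : ∀ j k : Fin n, T j.succ k.succ = T j.castSucc k.castSucc)
    {x y : Fin (n + 1) → R} (hx : x (Fin.last n) = 0) (hy : y (Fin.last n) = 0) :
    Fin.cons 0 (Fin.init x) ⬝ᵥ T *ᵥ Fin.cons 0 (Fin.init y) = x ⬝ᵥ T *ᵥ y := by
  conv_lhs => rw [dotProduct, Fin.sum_univ_succ]
  conv_rhs => rw [dotProduct, Fin.sum_univ_castSucc]
  simp only [Fin.cons_zero, Fin.cons_succ, hx, zero_mul, zero_add, add_zero]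
  refine Finset.sum_congr rfl fun j _ => congrArg (Fin.init x j * ·) ?_
  conv_lhs => rw [mulVec, dotProduct, Fin.sum_univ_succ]
  conv_rhs => rw [mulVec, dotProduct, Fin.sum_univ_castSucc]
  simp only [Fin.cons_zero, Fin.cons_succ, hy, mul_zero, zero_add, add_zero, Fin.init, hT]

theorem star_cons_zero_init {R : Type*} [AddMonoid R] [StarAddMonoid R] {n : ℕ}
    (x : Fin (n + 1) → R) :
    star (Fin.cons 0 (Fin.init x) : Fin (n + 1) → R) = Fin.cons 0 (Fin.init (star x)) := by
  ext j
  cases j using Fin.cases <;> simp [Fin.init]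

theorem eq_zero_of_cons_zero_init_eq_smul {R : Type*} [MonoidWithZero R] {n : ℕ}
    {x : Fin (n + 1) → R} {μ : R} (hx : x (Fin.last n) = 0)
    (h : Fin.cons 0 (Fin.init x) = μ • x) : x = 0 := by
  ext j
  induction j using Fin.reverseInduction with
  | last => exact hx
  | cast i ih => simpa [Fin.init, ih] using congrFun h i.succ

theorem Matrix.IsHermitian.star_star_dotProduct_mulVec {R : Type*} [CommSemiring R] [StarRing R]
    {ι : Type*} [Fintype ι] {T : Matrix ι ι R} (hT : T.IsHermitian) (x y : ι → R) :
    star (star x ⬝ᵥ T *ᵥ y) = star y ⬝ᵥ T *ᵥ x := by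
  rw [star_dotProduct, star_mulVec, ← dotProduct_mulVec, hT.eq, star_star]

theorem Matrix.IsHermitian.star_dotProduct_mulVec_of_mulVec_eq_smul {R : Type*} [CommSemiring R]
    [StarRing R] {ι : Type*} [Fintype ι] {T : Matrix ι ι R} (hT : T.IsHermitian) {x y : ι → R}
    {z : R} (h : T *ᵥ y = z • T *ᵥ x) :
    star y ⬝ᵥ T *ᵥ y = z * star z * (star x ⬝ᵥ T *ᵥ x) := by
  calc star y ⬝ᵥ T *ᵥ y = z * star (star x ⬝ᵥ T *ᵥ y) := by
        rw [hT.star_star_dotProduct_mulVec, h, dotProduct_smul, smul_eq_mul]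
    _ = z * star z * star (star x ⬝ᵥ T *ᵥ x) := by
        rw [h, dotProduct_smul, smul_eq_mul, star_mul', mul_assoc]
    _ = z * star z * (star x ⬝ᵥ T *ᵥ x) := by rw [hT.star_star_dotProduct_mulVec]

theorem Matrix.exists_eq_smul_of_mulVec_eq_zero {K : Type*} [Field K] {m ι : Type*} [Fintype m]
    [Fintype ι] {T : Matrix m ι K} (hrank : T.rank + 1 = Fintype.card ι) {x y : ι → K}
    (hx : T *ᵥ x = 0) (hx0 : x ≠ 0) (hy : T *ᵥ y = 0) : ∃ μ : K, y = μ • x := by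
  have hker : Module.finrank K (LinearMap.ker T.mulVecLin) = 1 := by
    have h := LinearMap.finrank_range_add_finrank_ker T.mulVecLin
    rw [Module.finrank_fintype_fun_eq_card, ← hrank, Matrix.rank] at h
    omega
  obtain ⟨μ, hμ⟩ := (finrank_eq_one_iff_of_nonzero' (⟨x, hx⟩ : LinearMap.ker T.mulVecLin)
    fun h => hx0 (congrArg Subtype.val h)).mp hker ⟨y, hy⟩
  exact ⟨μ, (congrArg Subtype.val hμ).symm⟩

theorem stmt0_general (n : ℕ) (c : ℤ → ℂ)
    (T : Matrix (Fin (n + 1)) (Fin (n + 1)) ℂ)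
    (hT : ∀ j k : Fin (n + 1), T j k = c ((j : ℤ) - (k : ℤ)))
    (hpsd : T.PosSemidef) (hrank : T.rank = n)
    (ξ : Fin (n + 1) → ℂ) (hξ : ξ ≠ 0) (hker : T.mulVec ξ = 0)
    (z : ℂ) (hz : ∑ j : Fin (n + 1), ξ j * z ^ (j : ℕ) = 0) :
    ‖z‖ = 1 := by
  obtain ⟨a, ha, rfl⟩ := exists_eq_cons_zero_init_sub_smul hz
  set b : Fin (n + 1) → ℂ := Fin.cons 0 (Fin.init a)
  have hToeplitz : ∀ j k : Fin n, T j.succ k.succ = T j.castSucc k.castSucc := by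
    intro j k
    simp [hT]
  have hTb : T *ᵥ b = z • T *ᵥ a := by
    rwa [mulVec_sub, mulVec_smul, sub_eq_zero] at hker
  have hSb : star b ⬝ᵥ T *ᵥ b = star a ⬝ᵥ T *ᵥ a := by
    rw [star_cons_zero_init]
    exact dotProduct_mulVec_cons_zero_init hToeplitz (by simp [ha]) ha
  have hS := hpsd.1.star_dotProduct_mulVec_of_mulVec_eq_smul hTb
  rw [hSb] at hS
  by_cases hS0 : star a ⬝ᵥ T *ᵥ a = 0
  · have hTa : T *ᵥ a = 0 := (hpsd.dotProduct_mulVec_zero_iff a).mp hS0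
    have ha0 : a ≠ 0 := by
      rintro rfl
      exact hξ (funext fun j => by cases j using Fin.cases <;> simp [b, Fin.init])
    obtain ⟨μ, hμ⟩ := exists_eq_smul_of_mulVec_eq_zero (by simp [hrank]) hTa ha0
      (by rw [hTb, hTa, smul_zero])
    exact absurd (eq_zero_of_cons_zero_init_eq_smul ha hμ) ha0
  · have hz1 : z * star z = 1 := mul_right_cancel₀ hS0 (by rw [one_mul, ← hS])
    rw [Complex.star_def, Complex.mul_conj, Complex.ofReal_eq_one, Complex.normSq_eq_norm_sq] at hz1
    exact (pow_eq_one_iff_of_nonneg (norm_nonneg z) two_ne_zero).mp hz1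

/-- Let `n ≥ 1` and let `T` be an `(n+1)×(n+1)` complex Hermitian positive
semidefinite Toeplitz matrix (`T j k = c (j - k)` with `c (-m) = conj (c m)`), of rank `n`,
and let `ξ` be a nonzero vector in the kernel of `T`. Then every complex root `z` of
`P(z) = ∑ ξ_j z^j` satisfies `|z| = 1`. -/
theorem stmt0 (n : ℕ) (hn : 1 ≤ n) (c : ℤ → ℂ) (hc : ∀ m : ℤ, c (-m) = star (c m))
    (T : Matrix (Fin (n + 1)) (Fin (n + 1)) ℂ)
    (hT : ∀ j k : Fin (n + 1), T j k = c ((j : ℤ) - (k : ℤ)))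
    (hpsd : T.PosSemidef) (hrank : T.rank = n)
    (ξ : Fin (n + 1) → ℂ) (hξ : ξ ≠ 0) (hker : T.mulVec ξ = 0)
    (z : ℂ) (hz : ∑ j : Fin (n + 1), ξ j * z ^ (j : ℕ) = 0) :
    ‖z‖ = 1 :=
  stmt0_general n c T hT hpsd hrank ξ hξ hker z hz
end

section
/- Let n ≥ 1 and let T be an (n+1)×(n+1) complex Hermitian positive semidefinite Toeplitz matrix (T_{jk} = c_{j-k} with c_{-m} = conj(c_m)) of rank n, and let ξ = (ξ_0, …, ξ_n) be a nonzero vector in the kernel of T. Then ξ_0 ≠ 0 (and, by the same argument applied to the reversed vector, ξ_n ≠ 0). -/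
/-!
If `ξ 0 = 0`, shifting `ξ` one place up (dropping `ξ 0`, appending a zero) does not change the
value of the Hermitian form of a Toeplitz matrix, so by positive semidefiniteness the shifted
vector is again in the kernel. The kernel is a line, hence the shift is `a • ξ`, which forces all
coordinates of `ξ` to vanish one after the other. For the last coordinate, the conjugate of the
reversed vector lies in the kernel of a Hermitian Toeplitz matrix.
-/

open scoped ComplexOrder Matrix

lemma Fin.eq_zero_of_snoc_tail_eq_smul {R : Type*} [MulZeroClass R] {n : ℕ}
    {x : Fin (n + 1) → R} (hx : x 0 = 0) {a : R} (h : Fin.snoc (Fin.tail x) 0 = a • x) :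
    x = 0 := by
  funext i
  induction i using Fin.induction with
  | zero => exact hx
  | succ i ih => simpa [Fin.tail, ih] using congrFun h i.castSucc

namespace Matrix

lemma star_snoc_tail_dotProduct_mulVec {R : Type*} [Semiring R] [StarRing R] {n : ℕ}
    (A : Matrix (Fin (n + 1)) (Fin (n + 1)) R)
    (hA : A.submatrix Fin.succ Fin.succ = A.submatrix Fin.castSucc Fin.castSucc)
    (x : Fin (n + 1) → R) (hx : x 0 = 0) :
    star (Fin.snoc (Fin.tail x) 0 : Fin (n + 1) → R) ⬝ᵥ A *ᵥ Fin.snoc (Fin.tail x) 0 =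
      star x ⬝ᵥ A *ᵥ x := by
  have hA' (j k : Fin n) : A j.succ k.succ = A j.castSucc k.castSucc := congrFun₂ hA j k
  conv_lhs => simp only [dotProduct, mulVec, Fin.sum_univ_castSucc]
  conv_rhs => simp only [dotProduct, mulVec, Fin.sum_univ_succ]
  simp [hx, hA', Fin.tail]

lemma mulVec_star_comp_symm {R m : Type*} [CommSemiring R] [StarRing R] [Fintype m]
    {A : Matrix m m R} (σ : m ≃ m) (hA : ∀ j k, A (σ j) (σ k) = star (A j k)) (x : m → R) :
    A *ᵥ (star x ∘ σ.symm) = star (A *ᵥ x) ∘ σ.symm := by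
  funext j
  obtain ⟨j, rfl⟩ := σ.surjective j
  simp only [mulVec, dotProduct, Function.comp_apply, Equiv.symm_apply_apply, Pi.star_apply,
    star_sum, star_mul']
  rw [← Equiv.sum_comp σ]
  simp [hA]

lemma exists_smul_eq_of_rank_add_one {K m n : Type*} [Field K] [Fintype m] [Fintype n]
    {A : Matrix m n K} (hA : A.rank + 1 = Fintype.card n) {x y : n → K} (hx : x ≠ 0)
    (hAx : A *ᵥ x = 0) (hAy : A *ᵥ y = 0) : ∃ a : K, a • x = y := by
  have hker : Module.finrank K (LinearMap.ker A.mulVecLin) = 1 := by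
    have := LinearMap.finrank_range_add_finrank_ker A.mulVecLin
    rw [Module.finrank_fintype_fun_eq_card] at this
    rw [rank] at hA
    omega
  have hspan : Submodule.span K {x} = LinearMap.ker A.mulVecLin :=
    Submodule.eq_of_le_of_finrank_le (by simpa [Submodule.span_singleton_le_iff_mem] using hAx)
      (by rw [hker, finrank_span_singleton hx])
  have hy : y ∈ LinearMap.ker A.mulVecLin := by simpa using hAy
  exact Submodule.mem_span_singleton.mp (hspan ▸ hy)

lemma PosSemidef.apply_zero_ne_zero_of_mulVec_eq_zero {𝕜 : Type*} [RCLike 𝕜] {n : ℕ}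
    {T : Matrix (Fin (n + 1)) (Fin (n + 1)) 𝕜} (hT : T.PosSemidef)
    (hshift : T.submatrix Fin.succ Fin.succ = T.submatrix Fin.castSucc Fin.castSucc)
    (hrank : T.rank = n) {ξ : Fin (n + 1) → 𝕜} (hξ : ξ ≠ 0) (hker : T *ᵥ ξ = 0) :
    ξ 0 ≠ 0 := by
  intro h0
  have hshift_ker : T *ᵥ Fin.snoc (Fin.tail ξ) 0 = 0 := by
    rw [← hT.dotProduct_mulVec_zero_iff, star_snoc_tail_dotProduct_mulVec T hshift ξ h0, hker,
      dotProduct_zero]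
  obtain ⟨a, ha⟩ := exists_smul_eq_of_rank_add_one (by simp [hrank]) hξ hker hshift_ker
  exact hξ (Fin.eq_zero_of_snoc_tail_eq_smul h0 ha.symm)

end Matrix

theorem stmt2_general (n : ℕ) (c : ℤ → ℂ) (hc : ∀ m : ℤ, c (-m) = star (c m))
    (T : Matrix (Fin (n + 1)) (Fin (n + 1)) ℂ)
    (hT : ∀ j k : Fin (n + 1), T j k = c ((j : ℤ) - (k : ℤ)))
    (hpsd : T.PosSemidef) (hrank : T.rank = n)
    (ξ : Fin (n + 1) → ℂ) (hξ : ξ ≠ 0) (hker : T.mulVec ξ = 0) :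
    ξ 0 ≠ 0 ∧ ξ (Fin.last n) ≠ 0 := by
  have hshift : T.submatrix Fin.succ Fin.succ = T.submatrix Fin.castSucc Fin.castSucc := by
    ext j k
    simp only [Matrix.submatrix_apply, hT, Fin.val_succ, Fin.val_castSucc]
    congr 1
    push_cast
    ring
  have hrev (j k : Fin (n + 1)) : T (Fin.revPerm j) (Fin.revPerm k) = star (T j k) := by
    rw [hT, hT, ← hc]
    congr 1
    simp only [Fin.revPerm_apply, Fin.val_rev]
    omega
  refine ⟨hpsd.apply_zero_ne_zero_of_mulVec_eq_zero hshift hrank hξ hker, fun hlast => ?_⟩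
  have hker' : T *ᵥ (star ξ ∘ Fin.revPerm.symm) = 0 := by
    rw [Matrix.mulVec_star_comp_symm _ hrev, hker, star_zero, Pi.zero_comp]
  have hξ' : star ξ ∘ Fin.revPerm.symm ≠ 0 := fun h =>
    hξ (funext fun j => by simpa using congrFun h j.rev)
  exact hpsd.apply_zero_ne_zero_of_mulVec_eq_zero hshift hrank hξ' hker' (by simp [hlast])

/-- Let `n ≥ 1` and let `T` be an `(n+1)×(n+1)` complex Hermitian positive
semidefinite Toeplitz matrix (`T j k = c (j - k)` with `c (-m) = conj (c m)`) of rank `n`, and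
let `ξ` be a nonzero vector in the kernel of `T`. Then `ξ 0 ≠ 0` and `ξ n ≠ 0`. -/
theorem stmt2 (n : ℕ) (hn : 1 ≤ n) (c : ℤ → ℂ) (hc : ∀ m : ℤ, c (-m) = star (c m))
    (T : Matrix (Fin (n + 1)) (Fin (n + 1)) ℂ)
    (hT : ∀ j k : Fin (n + 1), T j k = c ((j : ℤ) - (k : ℤ)))
    (hpsd : T.PosSemidef) (hrank : T.rank = n)
    (ξ : Fin (n + 1) → ℂ) (hξ : ξ ≠ 0) (hker : T.mulVec ξ = 0) :
    ξ 0 ≠ 0 ∧ ξ (Fin.last n) ≠ 0 :=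
  stmt2_general n c hc T hT hpsd hrank ξ hξ hker
end

section
/- Let L > 0 and for n ∈ ℤ define U_n(x) = L^{−1/2} exp(2πinx/L) for x ∈ [0, L] and U_n(x) = 0 for x ∉ [0, L]. With the involution f*(x) = conj(f(−x)) and convolution (f∗g)(y) = ∫_ℝ f(x) g(y − x) dx, one has for all integers n ≠ m and all y ∈ [0, L]: (U_m* ∗ U_n)(y) + (U_m* ∗ U_n)(−y) = (sin(2πmy/L) − sin(2πny/L)) / (π(n − m)). -/
/-!
On its support `[-L, 0] ∩ [t - L, t]`, the integrand of `(U_m* ∗ U_n)(t)` is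
`exp(2πi(nt + (m - n)x)/L) / L`, an exponential in `x`, so the convolution is a difference of
two exponentials divided by `2πi(m - n)`. Since `exp(2πi(m - n)x/L)` is `L`-periodic, this is
`±(e_n(t) - e_m(t)) / (2πi(m - n))` with `e_k(t) = exp(2πikt/L)`, the sign being that of `t`.
Adding the values at `y` and `-y` pairs the terms as `e_k(y) - e_k(-y) = 2i sin(2πky/L)`.
-/

/-- `U n` for `L`: the function `x ↦ L^(-1/2) exp(2πinx/L)` on `[0, L]`, extended by `0`. -/
noncomputable def Ufun (L : ℝ) (n : ℤ) (x : ℝ) : ℂ :=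
  if x ∈ Set.Icc (0 : ℝ) L then
    ((Real.sqrt L)⁻¹ : ℝ) * Complex.exp (2 * Real.pi * Complex.I * n * x / L)
  else 0

/-- The involution `f*(x) = conj (f (-x))`. -/
noncomputable def fstar (f : ℝ → ℂ) (x : ℝ) : ℂ := starRingEnd ℂ (f (-x))

/-- Convolution `(f ∗ g)(y) = ∫ f(x) g(y - x) dx`. -/
noncomputable def conv (f g : ℝ → ℂ) (y : ℝ) : ℂ := ∫ x : ℝ, f x * g (y - x)

open Complex MeasureTheory Set
open scoped Real

lemma integral_Icc_cexp_add_mul {c : ℂ} (hc : c ≠ 0) (a : ℂ) {p q : ℝ} (hpq : p ≤ q) :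
    ∫ x in Icc p q, cexp (a + c * x) = (cexp (a + c * q) - cexp (a + c * p)) / c := by
  simp only [Complex.exp_add]
  rw [integral_Icc_eq_integral_Ioc, ← intervalIntegral.integral_of_le hpq,
    intervalIntegral.integral_const_mul, integral_exp_mul_complex hc]
  ring

lemma cexp_mul_I_sub_cexp_neg_mul_I (z : ℂ) : cexp (z * I) - cexp (-z * I) = 2 * I * sin z := by
  rw [exp_mul_I, exp_mul_I, Complex.cos_neg, Complex.sin_neg]
  ring

lemma cexp_sub_int_mul_two_pi_mul_I (z : ℂ) (k : ℤ) : cexp (z - k * (2 * π * I)) = cexp z := by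
  rw [Complex.exp_sub, exp_int_mul_two_pi_mul_I, div_one]

lemma fstar_Ufun_mul_Ufun_sub {L : ℝ} (hL : 0 ≤ L) (n m : ℤ) (t x : ℝ) :
    fstar (Ufun L m) x * Ufun L n (t - x) =
      (Icc (-L) 0 ∩ Icc (t - L) t).indicator
        (fun x : ℝ => cexp (2 * π * I * (n * t + (m - n) * x) / L) / L) x := by
  have hneg : -x ∈ Icc 0 L ↔ x ∈ Icc (-L) 0 := by
    simp only [mem_Icc]
    constructor <;> intro h <;> constructor <;> linarith [h.1, h.2]
  have hsub : t - x ∈ Icc 0 L ↔ x ∈ Icc (t - L) t := by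
    simp only [mem_Icc]
    constructor <;> intro h <;> constructor <;> linarith [h.1, h.2]
  by_cases hx : x ∈ Icc (-L) 0 ∩ Icc (t - L) t
  · rw [indicator_of_mem hx, fstar, Ufun, Ufun, if_pos (hneg.2 hx.1), if_pos (hsub.2 hx.2),
      map_mul, conj_ofReal, ← exp_conj, mul_mul_mul_comm, ← ofReal_mul, ← mul_inv,
      Real.mul_self_sqrt hL, ← Complex.exp_add, ofReal_inv, inv_mul_eq_div]
    congr 2
    simp only [map_div₀, map_mul, conj_ofReal, conj_I, map_ofNat, map_intCast]
    push_cast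
    ring
  · rw [indicator_of_notMem hx, fstar, Ufun, Ufun]
    rcases not_and_or.1 hx with h | h
    · rw [if_neg (mt hneg.1 h), map_zero, zero_mul]
    · rw [if_neg (mt hsub.1 h), mul_zero]

lemma conv_fstar_Ufun_Ufun {L : ℝ} (hL : 0 ≤ L) (n m : ℤ) (t : ℝ) :
    conv (fstar (Ufun L m)) (Ufun L n) t =
      ∫ x in Icc (-L) 0 ∩ Icc (t - L) t, cexp (2 * π * I * (n * t + (m - n) * x) / L) / L := by
  rw [conv, ← integral_indicator (measurableSet_Icc.inter measurableSet_Icc)]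
  simp_rw [fstar_Ufun_mul_Ufun_sub hL]

lemma integral_Icc_cexp_two_pi_I_mul_div {L : ℝ} (hL : L ≠ 0) {n m : ℤ} (hnm : n ≠ m) (t : ℝ)
    {p q : ℝ} (hpq : p ≤ q) :
    ∫ x in Icc p q, cexp (2 * π * I * (n * t + (m - n) * x) / L) / L =
      (cexp (2 * π * I * (n * t + (m - n) * q) / L) -
        cexp (2 * π * I * (n * t + (m - n) * p) / L)) / (2 * π * I * (m - n)) := by
  have hL' : (L : ℂ) ≠ 0 := ofReal_ne_zero.2 hL
  have hmn : (m - n : ℂ) ≠ 0 := sub_ne_zero.2 (Int.cast_injective.ne hnm.symm)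
  have hc : 2 * π * I * (m - n) / L ≠ 0 := by simp [hL', hmn, Real.pi_ne_zero, I_ne_zero]
  have hexp : ∀ x : ℂ, 2 * π * I * (n * t + (m - n) * x) / L =
      2 * π * I * n * t / L + 2 * π * I * (m - n) / L * x := fun x => by ring
  simp_rw [hexp, integral_div, integral_Icc_cexp_add_mul hc _ hpq]
  field_simp

section
variable {L : ℝ} (hL : 0 < L) {n m : ℤ} (hnm : n ≠ m)
include hL hnm

lemma conv_fstar_Ufun_Ufun_of_nonneg {t : ℝ} (ht₀ : 0 ≤ t) (htL : t ≤ L) :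
    conv (fstar (Ufun L m)) (Ufun L n) t =
      (cexp (2 * π * n * t / L * I) - cexp (2 * π * m * t / L * I)) / (2 * π * I * (m - n)) := by
  rw [conv_fstar_Ufun_Ufun hL.le, Icc_inter_Icc, max_eq_right (by linarith), min_eq_left ht₀,
    integral_Icc_cexp_two_pi_I_mul_div hL.ne' hnm t (by linarith)]
  have hL' : (L : ℂ) ≠ 0 := ofReal_ne_zero.2 hL.ne'
  congr 2
  · congr 1
    push_cast
    ring
  · rw [← cexp_sub_int_mul_two_pi_mul_I _ (n - m)]
    congr 1
    push_cast
    field_simp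
    ring

lemma conv_fstar_Ufun_Ufun_of_nonpos {t : ℝ} (htL : -L ≤ t) (ht₀ : t ≤ 0) :
    conv (fstar (Ufun L m)) (Ufun L n) t =
      (cexp (2 * π * m * t / L * I) - cexp (2 * π * n * t / L * I)) / (2 * π * I * (m - n)) := by
  rw [conv_fstar_Ufun_Ufun hL.le, Icc_inter_Icc, max_eq_left (by linarith), min_eq_right ht₀,
    integral_Icc_cexp_two_pi_I_mul_div hL.ne' hnm t htL]
  have hL' : (L : ℂ) ≠ 0 := ofReal_ne_zero.2 hL.ne'
  congr 2
  · congr 1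
    ring
  · rw [← cexp_sub_int_mul_two_pi_mul_I _ (n - m)]
    congr 1
    push_cast
    field_simp
    ring

end

/-- For `n ≠ m` and `y ∈ [0, L]`:
`(U_m* ∗ U_n)(y) + (U_m* ∗ U_n)(-y) = (sin(2πmy/L) - sin(2πny/L)) / (π(n - m))`. -/
theorem stmt5 (L : ℝ) (hL : 0 < L) (n m : ℤ) (hnm : n ≠ m)
    (y : ℝ) (hy : y ∈ Set.Icc (0 : ℝ) L) :
    conv (fstar (Ufun L m)) (Ufun L n) y + conv (fstar (Ufun L m)) (Ufun L n) (-y) =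
      ((Real.sin (2 * Real.pi * m * y / L) - Real.sin (2 * Real.pi * n * y / L)) /
        (Real.pi * (n - m)) : ℝ) := by
  obtain ⟨hy₀, hyL⟩ := hy
  have hneg : ∀ k : ℤ, (2 * π * k * (-y : ℝ) / L : ℂ) = -(2 * π * k * y / L) := fun k => by
    push_cast
    ring
  rw [conv_fstar_Ufun_Ufun_of_nonneg hL hnm hy₀ hyL,
    conv_fstar_Ufun_Ufun_of_nonpos hL hnm (by linarith) (by linarith), hneg, hneg, ← add_div,
    show ∀ a b c d : ℂ, a - b + (c - d) = a - d - (b - c) from fun _ _ _ _ => by ring,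
    cexp_mul_I_sub_cexp_neg_mul_I, cexp_mul_I_sub_cexp_neg_mul_I]
  have hmn : (m - n : ℂ) ≠ 0 := sub_ne_zero.2 (Int.cast_injective.ne hnm.symm)
  have hnm' : (n - m : ℂ) ≠ 0 := sub_ne_zero.2 (Int.cast_injective.ne hnm)
  push_cast
  field_simp
  ring
end

section
/- Let L > 0 and f ∈ L²([0, L]). Define f^σ : ℝ → ℂ by f^σ(x) = f(x + L/2) for |x| ≤ L/2 and f^σ(x) = 0 otherwise, and let F(f^σ)(s) = ∫_ℝ f^σ(x) e^{−isx} dx. Then for every s ∈ ℝ with Ls/2 ∉ πℤ, the series Σ_{n∈ℤ} f̂(n) / (Ls/2 − nπ) converges absolutely and F(f^σ)(s) = sin(Ls/2) · Σ_{n∈ℤ} f̂(n) / (Ls/2 − nπ), where f̂(n) = ∫_0^L f(x) exp(−2πinx/L) dx. -/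
/-!
Let `g(x) = exp(isx)` on `[0, L]`. Its Fourier coefficients are
`exp(iLs/2) sin(Ls/2) / (Ls/2 - nπ)`, so the polarized Parseval identity
`∫₀ᴸ conj(g) f = L ∑ conj(ĝ n) f̂ n` turns `∫₀ᴸ exp(-isx) f(x) dx` into
`sin(Ls/2) ∑ f̂ n / (Ls/2 - nπ)`, up to the phase `exp(-iLs/2)` which is exactly what translating
`f` by `L/2` produces. Absolute convergence is Cauchy–Schwarz for the two `ℓ²` coefficient
sequences, after dividing by `sin(Ls/2) ≠ 0`.
-/

open MeasureTheory Set AddCircle Complex ComplexConjugate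
open scoped Real

section Parseval

variable {T : ℝ} [hT : Fact (0 < T)]

theorem hasSum_conj_fourierCoeff_mul_fourierCoeff (f g : Lp ℂ 2 (@haarAddCircle T hT)) :
    HasSum (fun n => conj (fourierCoeff g n) * fourierCoeff f n)
      (∫ t, conj (g t) * f t ∂haarAddCircle) := by
  have h := fourierBasis.hasSum_inner_mul_inner g f
  simp only [fun n => (inner_conj_symm (𝕜 := ℂ) g (fourierBasis n)).symm,
    ← fourierBasis.repr_apply_apply, fourierBasis_repr] at h
  simpa only [L2.inner_def, RCLike.inner_apply, mul_comm (f _)] using h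

theorem summable_norm_fourierCoeff_mul_fourierCoeff (f g : Lp ℂ 2 (@haarAddCircle T hT)) :
    Summable fun n => ‖fourierCoeff g n * fourierCoeff f n‖ := by
  have h := lp.summable_mul (by rw [Real.holderConjugate_iff]; norm_num)
    (fourierBasis.repr g) (fourierBasis.repr f)
  simpa only [norm_mul, fourierBasis_repr] using h

theorem fourierCoeffOn_eq_fourierCoeff_toLp {a : ℝ} {f : ℝ → ℂ}
    (hf : MemLp f 2 (volume.restrict (Ioc a (a + T)))) :
    fourierCoeffOn (lt_add_of_pos_right a hT.out) f =
      fourierCoeff (hf.memLp_liftIoc.haarAddCircle.toLp _) := by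
  ext n
  rw [fourierCoeff_congr_ae hf.memLp_liftIoc.haarAddCircle.coeFn_toLp, fourierCoeff_liftIoc_eq]

end Parseval

section FourierCoeffOn

variable {a b : ℝ} (hab : a < b) {f g : ℝ → ℂ}
  (hf : MemLp f 2 (volume.restrict (Ioc a b))) (hg : MemLp g 2 (volume.restrict (Ioc a b)))
include hf hg

theorem hasSum_conj_fourierCoeffOn_mul_fourierCoeffOn :
    HasSum (fun n => conj (fourierCoeffOn hab g n) * fourierCoeffOn hab f n)
      ((b - a)⁻¹ * ∫ x in a..b, conj (g x) * f x) := by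
  obtain ⟨T, hT, rfl⟩ : ∃ T, 0 < T ∧ b = a + T := ⟨b - a, sub_pos.2 hab, by ring⟩
  have := Fact.mk hT
  have hF := hf.memLp_liftIoc.haarAddCircle
  have hG := hg.memLp_liftIoc.haarAddCircle
  have h := hasSum_conj_fourierCoeff_mul_fourierCoeff hF.toLp hG.toLp
  rw [← fourierCoeffOn_eq_fourierCoeff_toLp hf, ← fourierCoeffOn_eq_fourierCoeff_toLp hg] at h
  convert h using 1
  have hFG : (fun t => conj (hG.toLp _ t) * hF.toLp _ t) =ᵐ[haarAddCircle]
      liftIoc T a fun x => conj (g x) * f x := by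
    filter_upwards [hF.coeFn_toLp, hG.coeFn_toLp] with t hFt hGt
    rw [hFt, hGt]
    rfl
  rw [integral_congr_ae hFG, integral_haarAddCircle, integral_liftIoc_eq_intervalIntegral,
    add_sub_cancel_left, real_smul, ofReal_inv]

theorem summable_norm_fourierCoeffOn_mul_fourierCoeffOn :
    Summable fun n => ‖fourierCoeffOn hab g n * fourierCoeffOn hab f n‖ := by
  obtain ⟨T, hT, rfl⟩ : ∃ T, 0 < T ∧ b = a + T := ⟨b - a, sub_pos.2 hab, by ring⟩
  have := Fact.mk hT
  rw [fourierCoeffOn_eq_fourierCoeff_toLp hf, fourierCoeffOn_eq_fourierCoeff_toLp hg]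
  exact summable_norm_fourierCoeff_mul_fourierCoeff _ _

end FourierCoeffOn

theorem fourierCoeffOn_eq_mul_integral_exp {a b : ℝ} (hab : a < b) (f : ℝ → ℂ) (n : ℤ) :
    fourierCoeffOn hab f n =
      ((b - a : ℝ) : ℂ)⁻¹ * ∫ x in a..b, f x * exp (-2 * π * I * n * x / (b - a : ℝ)) := by
  have := Fact.mk (sub_pos.2 hab)
  rw [fourierCoeffOn_eq_integral, one_div, ← ofReal_inv, ← real_smul]
  congr 2 with x
  rw [fourier_coe_apply, smul_eq_mul, mul_comm]
  push_cast
  ring_nf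

theorem fourierCoeffOn_exp_mul_I {L : ℝ} (hL : 0 < L) (s : ℝ) {n : ℤ}
    (hn : L * s / 2 ≠ n * π) :
    fourierCoeffOn hL (fun x => exp (I * s * x)) n =
      exp (I * s * L / 2) * Real.sin (L * s / 2) / ((L * s / 2 - n * π : ℝ) : ℂ) := by
  have hL' : (L : ℂ) ≠ 0 := ofReal_ne_zero.2 hL.ne'
  have hd : ((L * s / 2 - n * π : ℝ) : ℂ) ≠ 0 := ofReal_ne_zero.2 (sub_ne_zero.2 hn)
  set c : ℂ := 2 * I * ((L * s / 2 - n * π : ℝ) : ℂ) / L with hc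
  have hc0 : c ≠ 0 := div_ne_zero (mul_ne_zero (mul_ne_zero two_ne_zero I_ne_zero) hd) hL'
  have hprod : ∀ x : ℝ, exp (I * s * x) * exp (-2 * π * I * n * x / L) = exp (c * x) := by
    intro x
    rw [← exp_add, hc]
    congr 1
    push_cast
    field_simp
    ring
  have hcL : exp (c * L) = exp (I * s * L / 2) ^ 2 := by
    rw [← exp_nat_mul, hc, div_mul_cancel₀ _ hL']
    push_cast
    rw [show 2 * I * (L * s / 2 - n * π) = 2 * (I * s * L / 2) - n * (2 * π * I) by ring,
      exp_sub, exp_int_mul_two_pi_mul_I, div_one]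
  rw [fourierCoeffOn_eq_mul_integral_exp, sub_zero]
  simp only [hprod]
  have hw : exp ((L * s / 2 : ℝ) * I) = exp (I * s * L / 2) := by
    push_cast
    ring_nf
  rw [integral_exp_mul_complex hc0, hcL, ofReal_zero, mul_zero, exp_zero, ofReal_sin, sin,
    neg_mul, exp_neg, hw, hc]
  have hw0 := exp_ne_zero (I * s * L / 2)
  generalize exp (I * s * L / 2) = w at hw0 ⊢
  generalize ((L * s / 2 - n * π : ℝ) : ℂ) = d at hd ⊢
  field_simp
  linear_combination (w ^ 2 - 1) * I_sq

theorem integral_ite_abs_le_mul {L : ℝ} (hL : 0 ≤ L) (f e : ℝ → ℂ) :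
    ∫ x, (if |x| ≤ L / 2 then f (x + L / 2) else 0) * e x =
      ∫ x in 0..L, f x * e (x - L / 2) := by
  have hind : (fun x => (if |x| ≤ L / 2 then f (x + L / 2) else 0) * e x) =
      indicator (Icc (-(L / 2)) (L / 2)) fun x => f (x + L / 2) * e x := by
    ext x
    simp only [ite_mul, zero_mul, indicator_apply, mem_Icc, abs_le]
  have hshift := intervalIntegral.integral_comp_add_right (fun x => f x * e (x - L / 2))
    (a := -(L / 2)) (b := L / 2) (L / 2)
  simp only [add_sub_cancel_right, neg_add_cancel, add_halves] at hshift
  rw [hind, integral_indicator measurableSet_Icc, integral_Icc_eq_integral_Ioc,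
    ← intervalIntegral.integral_of_le (by linarith), hshift]

theorem memLp_exp_mul_I (s : ℝ) (μ : Measure ℝ) [IsFiniteMeasure μ] :
    MemLp (fun x : ℝ => exp (I * s * x)) 2 μ :=
  MemLp.of_bound (by fun_prop) 1 (ae_of_all _ fun x => by simp [norm_exp])

section Sampling

variable {L : ℝ} (hL : 0 < L) {f : ℝ → ℂ} {s : ℝ} (hs : ∀ k : ℤ, L * s / 2 ≠ k * π)
include hs

theorem conj_fourierCoeffOn_exp_mul_I_mul (n : ℤ) :
    conj (fourierCoeffOn hL (fun x => exp (I * s * x)) n) * fourierCoeffOn hL f n =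
      exp (-(I * s * L / 2)) * Real.sin (L * s / 2) *
        (fourierCoeffOn hL f n / ((L * s / 2 - n * π : ℝ) : ℂ)) := by
  rw [fourierCoeffOn_exp_mul_I hL s (hs n)]
  simp only [map_div₀, map_mul, conj_ofReal, ← exp_conj, conj_I, map_ofNat]
  ring_nf

variable (hf : MemLp f 2 (volume.restrict (Ioc 0 L)))
include hf

theorem summable_norm_fourierCoeffOn_div :
    Summable fun n : ℤ => ‖fourierCoeffOn hL f n / ((L * s / 2 - n * π : ℝ) : ℂ)‖ := by
  have hsin : Real.sin (L * s / 2) ≠ 0 := fun h0 =>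
    let ⟨k, hk⟩ := Real.sin_eq_zero_iff.1 h0
    hs k hk.symm
  have hK : exp (-(I * s * L / 2)) * Real.sin (L * s / 2) ≠ 0 :=
    mul_ne_zero (exp_ne_zero _) (ofReal_ne_zero.2 hsin)
  have h := summable_norm_fourierCoeffOn_mul_fourierCoeffOn hL hf (memLp_exp_mul_I s _)
  refine (summable_mul_left_iff (norm_ne_zero_iff.2 hK)).1 (h.congr fun n => ?_)
  rw [← norm_mul, ← conj_fourierCoeffOn_exp_mul_I_mul hL hs, norm_mul, norm_mul, norm_conj]

theorem sin_mul_tsum_fourierCoeffOn_div :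
    Real.sin (L * s / 2) * ∑' n : ℤ, fourierCoeffOn hL f n / ((L * s / 2 - n * π : ℝ) : ℂ) =
      exp (I * s * L / 2) * ((L : ℂ)⁻¹ * ∫ x in 0..L, exp (-I * s * x) * f x) := by
  have h := (hasSum_conj_fourierCoeffOn_mul_fourierCoeffOn hL hf (memLp_exp_mul_I s _)).tsum_eq
  simp only [conj_fourierCoeffOn_exp_mul_I_mul hL hs, tsum_mul_left, sub_zero, ← exp_conj,
    map_mul, conj_I, conj_ofReal, ofReal_inv] at h
  rw [← h, ← mul_assoc, ← mul_assoc, ← exp_add, add_neg_cancel, exp_zero, one_mul]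

end Sampling

/-- Shannon sampling reformulation. For `f ∈ L²([0, L])`, with
`f^σ(x) = f(x + L/2)` on `[-L/2, L/2]` extended by zero, for every real `s` with
`Ls/2 ∉ πℤ`, the series `∑_{n ∈ ℤ} f̂(n)/(Ls/2 - nπ)` converges absolutely and
`F(f^σ)(s) = sin(Ls/2) ∑_{n ∈ ℤ} f̂(n)/(Ls/2 - nπ)`. -/
theorem stmt8 (L : ℝ) (hL : 0 < L) (f : ℝ → ℂ)
    (hf : MemLp f 2 (volume.restrict (Set.Icc (0 : ℝ) L)))
    (s : ℝ) (hs : ∀ k : ℤ, L * s / 2 ≠ k * Real.pi) :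
    Summable (fun n : ℤ =>
      ‖(∫ x in Set.Icc (0 : ℝ) L, f x * Complex.exp (-2 * Real.pi * Complex.I * n * x / L)) /
          ((L * s / 2 - n * Real.pi : ℝ) : ℂ)‖) ∧
    (∫ x : ℝ, (if |x| ≤ L / 2 then f (x + L / 2) else 0) * Complex.exp (-Complex.I * s * x)) =
      (Real.sin (L * s / 2) : ℂ) *
        ∑' n : ℤ,
          (∫ x in Set.Icc (0 : ℝ) L, f x * Complex.exp (-2 * Real.pi * Complex.I * n * x / L)) /
            ((L * s / 2 - n * Real.pi : ℝ) : ℂ) := by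
  have hL' : (L : ℂ) ≠ 0 := ofReal_ne_zero.2 hL.ne'
  have hf' : MemLp f 2 (volume.restrict (Ioc 0 L)) :=
    hf.mono_measure (Measure.restrict_mono Ioc_subset_Icc_self le_rfl)
  have hcoeff (n : ℤ) : (∫ x in Icc 0 L, f x * exp (-2 * π * I * n * x / L)) /
      ((L * s / 2 - n * π : ℝ) : ℂ) =
      L * (fourierCoeffOn hL f n / ((L * s / 2 - n * π : ℝ) : ℂ)) := by
    rw [fourierCoeffOn_eq_mul_integral_exp, sub_zero, intervalIntegral.integral_of_le hL.le,
      ← integral_Icc_eq_integral_Ioc]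
    field_simp
  refine ⟨?_, ?_⟩
  · simp only [hcoeff, norm_mul]
    exact (summable_norm_fourierCoeffOn_div hL hs hf').mul_left _
  · rw [tsum_congr hcoeff, tsum_mul_left, mul_left_comm, sin_mul_tsum_fourierCoeffOn_div hL hs hf',
      integral_ite_abs_le_mul hL.le, mul_left_comm (L : ℂ), mul_inv_cancel_left₀ hL',
      ← intervalIntegral.integral_const_mul]
    congr 1 with x
    rw [mul_comm (f x), ← mul_assoc, ← exp_add]
    push_cast
    ring_nf
end

section
/- Let N ∈ ℕ and let Q = (q_{i,j}), i, j ∈ {−N, …, N}, be the real matrix with q_{i,i} = a_i and q_{i,j} = (b_i − b_j)/(i − j) for i ≠ j, where a_{−i} = a_i and b_{−i} = −b_i. Let γ(e_j) = e_{−j}, D(e_j) = j·e_j, β = Σ_j b_j e_j, η = Σ_j e_j. Assume Q is positive semidefinite and ξ ∈ ℝ^{2N+1} satisfies Qξ = 0, γξ = ξ, and ⟨ξ, η⟩ = 1. Then Q D ξ = −β. -/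
/-!
Since `q_{ij} (i - j) = b_i - b_j` off the diagonal, the commutator `QD - DQ` has entries
`b_j - b_i`. Applied to `ξ` with `Qξ = 0` this gives `QDξ = ⟨β, ξ⟩ η - ⟨ξ, η⟩ β`, and
`⟨β, ξ⟩ = 0` because `β` is odd and `ξ` is even under `γ`.
-/

/-- The index set `{-N, …, N}` as a subtype of `ℤ`. -/
abbrev Idx (N : ℕ) := {i : ℤ // i ∈ Finset.Icc (-(N : ℤ)) N}

/-- Negation on the index set `{-N, …, N}`. -/
def negIdx {N : ℕ} (i : Idx N) : Idx N :=
  ⟨-i.1, by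
    have := Finset.mem_Icc.mp i.2
    exact Finset.mem_Icc.mpr ⟨by omega, by omega⟩⟩

open Matrix

theorem Matrix.mulVec_diagonal_mulVec_of_offDiag {ι R : Type*} [Fintype ι] [DecidableEq ι]
    [CommRing R] (Q : Matrix ι ι R) (x c : ι → R)
    (hQ : ∀ i j, i ≠ j → Q i j * (x i - x j) = c i - c j) (v : ι → R) :
    Q *ᵥ (diagonal x *ᵥ v) = x * (Q *ᵥ v) + (fun _ => c ⬝ᵥ v) - (∑ j, v j) • c := by
  have hentry : ∀ i j, Q i j * (x j * v j) = x i * (Q i j * v j) - (c i - c j) * v j := by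
    intro i j
    rcases eq_or_ne i j with rfl | hij
    · ring
    · linear_combination -v j * hQ i j hij
  ext i
  calc (Q *ᵥ (diagonal x *ᵥ v)) i = ∑ j, Q i j * (x j * v j) := by
        simp only [mulVec, dotProduct, diagonal_apply, ite_mul, zero_mul, Finset.sum_ite_eq,
          Finset.mem_univ, if_true]
    _ = x i * ∑ j, Q i j * v j - (c i * ∑ j, v j - ∑ j, c j * v j) := by
        simp only [hentry, Finset.sum_sub_distrib, Finset.mul_sum, sub_mul]
    _ = _ := by
        simp only [mulVec, dotProduct, Pi.add_apply, Pi.sub_apply, Pi.mul_apply, Pi.smul_apply,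
          smul_eq_mul]
        ring

theorem Matrix.dotProduct_eq_zero_of_odd_of_even {ι R : Type*} [Fintype ι]
    [NonUnitalNonAssocRing R] [IsAddTorsionFree R] {σ : ι → ι} (hσ : Function.Involutive σ)
    {f g : ι → R} (hf : ∀ i, f (σ i) = -f i) (hg : ∀ i, g (σ i) = g i) : f ⬝ᵥ g = 0 := by
  refine self_eq_neg.mp ?_
  calc f ⬝ᵥ g = ∑ i, f (σ i) * g (σ i) := (Equiv.sum_comp (hσ.toPerm σ) fun i => f i * g i).symm
    _ = -(f ⬝ᵥ g) := by simp only [hf, hg, neg_mul, Finset.sum_neg_distrib, dotProduct]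

theorem negIdx_involutive (N : ℕ) : Function.Involutive (negIdx (N := N)) := fun i => by
  simp [negIdx]

theorem stmt10_general (N : ℕ) (b : Idx N → ℝ)
    (hb : ∀ i, b (negIdx i) = -b i)
    (Q : Matrix (Idx N) (Idx N) ℝ)
    (hQoff : ∀ i j, i ≠ j → Q i j = (b i - b j) / ((i.1 - j.1 : ℤ) : ℝ))
    (D : Matrix (Idx N) (Idx N) ℝ)
    (hD : D = Matrix.diagonal fun i => ((i.1 : ℤ) : ℝ))
    (ξ : Idx N → ℝ) (hker : Q.mulVec ξ = 0)
    (heven : ∀ i, ξ (negIdx i) = ξ i)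
    (hnorm : ∑ i : Idx N, ξ i = 1) :
    Q.mulVec (D.mulVec ξ) = -b := by
  have hQ : ∀ i j, i ≠ j → Q i j * (((i.1 : ℤ) : ℝ) - ((j.1 : ℤ) : ℝ)) = b i - b j := by
    intro i j hij
    have hsub : ((i.1 : ℤ) : ℝ) - ((j.1 : ℤ) : ℝ) ≠ 0 :=
      sub_ne_zero.mpr (by exact_mod_cast Subtype.val_injective.ne hij)
    rw [hQoff i j hij, Int.cast_sub, div_mul_cancel₀ _ hsub]
  have hbξ : b ⬝ᵥ ξ = 0 := dotProduct_eq_zero_of_odd_of_even (negIdx_involutive N) hb heven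
  rw [hD, mulVec_diagonal_mulVec_of_offDiag Q _ b hQ, hker, hbξ, hnorm]
  ext i
  simp

/-- With `Q` of the standard form (`a` even, `b` odd), `Q` positive
semidefinite, `Qξ = 0`, `γξ = ξ`, `⟨ξ, η⟩ = 1` (`η = ∑ e_j`), one has `Q D ξ = -β`
where `β = ∑ b_j e_j` and `D e_j = j e_j`. -/
theorem stmt10 (N : ℕ) (a b : Idx N → ℝ)
    (ha : ∀ i, a (negIdx i) = a i) (hb : ∀ i, b (negIdx i) = -b i)
    (Q : Matrix (Idx N) (Idx N) ℝ)
    (hQdiag : ∀ i, Q i i = a i)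
    (hQoff : ∀ i j, i ≠ j → Q i j = (b i - b j) / ((i.1 - j.1 : ℤ) : ℝ))
    (hpsd : Q.PosSemidef)
    (D : Matrix (Idx N) (Idx N) ℝ)
    (hD : D = Matrix.diagonal fun i => ((i.1 : ℤ) : ℝ))
    (ξ : Idx N → ℝ) (hker : Q.mulVec ξ = 0)
    (heven : ∀ i, ξ (negIdx i) = ξ i)
    (hnorm : ∑ i : Idx N, ξ i = 1) :
    Q.mulVec (D.mulVec ξ) = -b :=
  stmt10_general N b hb Q hQoff D hD ξ hker heven hnorm
end

section
/- Let N ∈ ℕ and let Q = (q_{i,j}), i, j ∈ {−N, …, N}, be the real matrix with q_{i,i} = a_i and q_{i,j} = (b_i − b_j)/(i − j) for i ≠ j, where a_{−i} = a_i and b_{−i} = −b_i. Let γ(e_j) = e_{−j}, D(e_j) = j·e_j, η = Σ_j e_j. Assume Q is positive semidefinite and ξ satisfies Qξ = 0, γξ = ξ, ⟨ξ, η⟩ = 1. Define D' := D − |Dξ⟩⟨η|. Then D' is selfadjoint with respect to the bilinear form defined by Q, i.e. ⟨Q D' f, g⟩ = ⟨Q f, D' g⟩ for all vectors f, g. -/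
/-!
With `D = diag x` and `Q i j = (b i - b j) / (x i - x j)` off the diagonal, the commutator
`Q D - D Q` is the rank-two matrix `|1⟩⟨b| - |b⟩⟨1|`. Applied to `ξ ∈ ker Q` with `⟨1, ξ⟩ = 1`
this gives `Q D ξ = ⟨b, ξ⟩ 1 - b`, so `(Q D') i j = Q i j x j - ⟨b, ξ⟩ + b i`, which is symmetric
in `i, j` by the same commutator identity. A symmetric `Q` with `Q D'` symmetric makes `D'`
selfadjoint for the form `⟨Q ·, ·⟩`.
-/

open Matrix

theorem Matrix.dotProduct_mulVec_mulVec_eq_of_isSymm {ι R : Type*} [Fintype ι] [CommSemiring R]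
    {Q A : Matrix ι ι R} (hQ : Q.IsSymm) (hQA : (Q * A).IsSymm) (f g : ι → R) :
    (Q *ᵥ (A *ᵥ f)) ⬝ᵥ g = (Q *ᵥ f) ⬝ᵥ (A *ᵥ g) := by
  have adjoint : ∀ (M : Matrix ι ι R) (u v : ι → R), (M *ᵥ u) ⬝ᵥ v = u ⬝ᵥ (Mᵀ *ᵥ v) := by
    intro M u v
    rw [dotProduct_mulVec, vecMul_transpose]
  calc (Q *ᵥ (A *ᵥ f)) ⬝ᵥ g = f ⬝ᵥ ((Q * A)ᵀ *ᵥ g) := by rw [mulVec_mulVec, adjoint]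
    _ = f ⬝ᵥ (Qᵀ *ᵥ (A *ᵥ g)) := by rw [hQA.eq, hQ.eq, mulVec_mulVec]
    _ = (Q *ᵥ f) ⬝ᵥ (A *ᵥ g) := (adjoint Q f _).symm

namespace Matrix.OffDiagDividedDifference

variable {ι R : Type*} [Field R] {Q : Matrix ι ι R} {x b : ι → R}
  (hx : Function.Injective x) (hQ : ∀ i j, i ≠ j → Q i j = (b i - b j) / (x i - x j))
include hx hQ

theorem apply_mul_sub (i j : ι) : Q i j * (x j - x i) = b j - b i := by
  obtain rfl | hij := eq_or_ne i j
  · ring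
  have hx' : x i - x j ≠ 0 := sub_ne_zero.mpr (hx.ne hij)
  rw [hQ i j hij]
  field_simp
  ring

theorem isSymm : Q.IsSymm := by
  refine IsSymm.ext fun i j => ?_
  obtain rfl | hij := eq_or_ne i j
  · rfl
  have hx' : x j - x i ≠ 0 := sub_ne_zero.mpr (hx.ne hij.symm)
  refine mul_right_cancel₀ hx' ?_
  linear_combination -apply_mul_sub hx hQ i j - apply_mul_sub hx hQ j i

variable [Fintype ι] [DecidableEq ι]

theorem mul_diagonal_sub_diagonal_mul :
    Q * diagonal x - diagonal x * Q = vecMulVec 1 b - vecMulVec b 1 := by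
  ext i j
  simp only [sub_apply, mul_diagonal, diagonal_mul, vecMulVec_apply, Pi.one_apply]
  linear_combination apply_mul_sub hx hQ i j

theorem mulVec_diagonal_mulVec {ξ : ι → R} (hξ : Q *ᵥ ξ = 0) (hsum : ∑ i, ξ i = 1) :
    Q *ᵥ (diagonal x *ᵥ ξ) = (b ⬝ᵥ ξ) • 1 - b := by
  have hcomm := mul_diagonal_sub_diagonal_mul hx hQ
  rw [sub_eq_iff_eq_add'] at hcomm
  rw [mulVec_mulVec, hcomm, add_mulVec, ← mulVec_mulVec, hξ, mulVec_zero, zero_add, sub_mulVec,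
    vecMulVec_mulVec, vecMulVec_mulVec, one_dotProduct, hsum]
  simp only [op_smul_eq_smul, MulOpposite.op_one, one_smul]

theorem mul_diagonal_sub_vecMulVec_isSymm {ξ : ι → R} (hξ : Q *ᵥ ξ = 0) (hsum : ∑ i, ξ i = 1) :
    (Q * (diagonal x - vecMulVec (diagonal x *ᵥ ξ) 1)).IsSymm := by
  have hentry : ∀ i j, (Q * (diagonal x - vecMulVec (diagonal x *ᵥ ξ) 1) : Matrix ι ι R) i j
      = Q i j * x j - (b ⬝ᵥ ξ - b i) := by
    intro i j
    rw [mul_sub, mul_vecMulVec, mulVec_diagonal_mulVec hx hQ hξ hsum]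
    simp only [vecMulVec_one, sub_apply, mul_diagonal, replicateCol_apply, Pi.sub_apply,
      Pi.smul_apply, Pi.one_apply, smul_eq_mul, mul_one]
  refine IsSymm.ext fun i j => ?_
  rw [hentry, hentry, (isSymm hx hQ).apply i j]
  linear_combination -apply_mul_sub hx hQ i j

end Matrix.OffDiagDividedDifference

theorem stmt11_general (N : ℕ) (b : Idx N → ℝ)
    (Q : Matrix (Idx N) (Idx N) ℝ)
    (hQoff : ∀ i j, i ≠ j → Q i j = (b i - b j) / ((i.1 - j.1 : ℤ) : ℝ))
    (D : Matrix (Idx N) (Idx N) ℝ)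
    (hD : D = Matrix.diagonal fun i => ((i.1 : ℤ) : ℝ))
    (ξ : Idx N → ℝ) (hker : Q.mulVec ξ = 0)
    (hnorm : ∑ i : Idx N, ξ i = 1)
    (D' : Matrix (Idx N) (Idx N) ℝ)
    (hD' : D' = D - Matrix.vecMulVec (D.mulVec ξ) fun _ => 1) :
    ∀ f g : Idx N → ℝ,
      dotProduct (Q.mulVec (D'.mulVec f)) g =
        dotProduct (Q.mulVec f) (D'.mulVec g) := by
  subst hD hD'
  have hx : Function.Injective fun i : Idx N => ((i.1 : ℤ) : ℝ) :=
    Int.cast_injective.comp Subtype.val_injective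
  have hQ : ∀ i j, i ≠ j → Q i j = (b i - b j) / (((i.1 : ℤ) : ℝ) - ((j.1 : ℤ) : ℝ)) := by
    simpa only [Int.cast_sub] using hQoff
  exact dotProduct_mulVec_mulVec_eq_of_isSymm (OffDiagDividedDifference.isSymm hx hQ)
    (OffDiagDividedDifference.mul_diagonal_sub_vecMulVec_isSymm hx hQ hker hnorm)

/-- With `Q` of the standard form (`a` even, `b` odd), `Q` positive
semidefinite, `Qξ = 0`, `γξ = ξ`, `⟨ξ, η⟩ = 1`, the operator `D' = D - |Dξ⟩⟨η|` is
selfadjoint for the bilinear form given by `Q`: `⟨Q D' f, g⟩ = ⟨Q f, D' g⟩` for all `f, g`. -/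
theorem stmt11 (N : ℕ) (a b : Idx N → ℝ)
    (ha : ∀ i, a (negIdx i) = a i) (hb : ∀ i, b (negIdx i) = -b i)
    (Q : Matrix (Idx N) (Idx N) ℝ)
    (hQdiag : ∀ i, Q i i = a i)
    (hQoff : ∀ i j, i ≠ j → Q i j = (b i - b j) / ((i.1 - j.1 : ℤ) : ℝ))
    (hpsd : Q.PosSemidef)
    (D : Matrix (Idx N) (Idx N) ℝ)
    (hD : D = Matrix.diagonal fun i => ((i.1 : ℤ) : ℝ))
    (ξ : Idx N → ℝ) (hker : Q.mulVec ξ = 0)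
    (heven : ∀ i, ξ (negIdx i) = ξ i)
    (hnorm : ∑ i : Idx N, ξ i = 1)
    (D' : Matrix (Idx N) (Idx N) ℝ)
    (hD' : D' = D - Matrix.vecMulVec (D.mulVec ξ) fun _ => 1) :
    ∀ f g : Idx N → ℝ,
      dotProduct (Q.mulVec (D'.mulVec f)) g =
        dotProduct (Q.mulVec f) (D'.mulVec g) :=
  stmt11_general N b Q hQoff D hD ξ hker hnorm D' hD'
end

section
/- Let N ∈ ℕ and let Q = (q_{i,j}), i, j ∈ {−N, …, N}, be the real matrix with q_{i,i} = a_i and q_{i,j} = (b_i − b_j)/(i − j) for i ≠ j, where a_{−i} = a_i and b_{−i} = −b_i. Let γ(e_j) = e_{−j}, D(e_j) = j·e_j, η = Σ_j e_j. Assume Q is positive semidefinite, Qξ = 0, γξ = ξ, ⟨ξ, η⟩ = 1, and set D' := D − |Dξ⟩⟨η|. Then for every s ∈ ℂ \ {−N, …, N} one has det(D' − s·Id) = −s · (∏_{i=−N}^{N} (i − s)) · (Σ_{j=−N}^{N} ξ_j / (j − s)); in particular, for such s, det(D' − s·Id) = 0 if and only if Σ_{j=−N}^{N} ξ_j / (s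 − j) = 0. -/
namespace Matrix

variable {ι K : Type*} [Fintype ι] [DecidableEq ι] [Field K]

theorem det_diagonal_add_vecMulVec (d u v : ι → K) (hd : ∀ i, d i ≠ 0) :
    det (diagonal d + vecMulVec u v) = (∏ i, d i) * (1 + ∑ i, v i * u i / d i) := by
  have hfactor :
      diagonal d + vecMulVec u v = diagonal d * (1 + vecMulVec (fun i => u i / d i) v) := by
    rw [mul_add, mul_one, mul_vecMulVec]
    congr 2
    funext i
    rw [mulVec_diagonal, mul_div_cancel₀ _ (hd i)]
  rw [hfactor, det_mul, det_diagonal, vecMulVec_eq Unit, det_one_add_replicateCol_mul_replicateRow]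
  simp only [dotProduct, mul_div_assoc]

theorem det_diagonal_sub_vecMulVec_sub_smul_one (l ξ : ι → K) (hξ : ∑ i, ξ i = 1) (s : K)
    (hs : ∀ i, l i ≠ s) :
    det (diagonal l - vecMulVec (diagonal l *ᵥ ξ) (fun _ => 1) - s • 1) =
      -s * (∏ i, (l i - s)) * ∑ i, ξ i / (l i - s) := by
  have hsplit : diagonal l - vecMulVec (diagonal l *ᵥ ξ) (fun _ => 1) - s • 1 =
      diagonal (fun i => l i - s) + vecMulVec (fun i => -(l i * ξ i)) (fun _ => 1) := by
    ext i j
    by_cases h : i = j <;> simp [h, vecMulVec_apply, mulVec_diagonal]; ring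
  have hterm : ∀ i, -(l i * ξ i) / (l i - s) = -ξ i + -s * (ξ i / (l i - s)) := by
    intro i
    field_simp [sub_ne_zero.mpr (hs i)]
    ring
  rw [hsplit, det_diagonal_add_vecMulVec _ _ _ fun i => sub_ne_zero.mpr (hs i)]
  simp only [one_mul, hterm, Finset.sum_add_distrib, Finset.sum_neg_distrib, hξ, ← Finset.mul_sum]
  ring

end Matrix

theorem stmt12_general (N : ℕ)
    (D : Matrix (Idx N) (Idx N) ℝ)
    (hD : D = Matrix.diagonal fun i => ((i.1 : ℤ) : ℝ))
    (ξ : Idx N → ℝ)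
    (hnorm : ∑ i : Idx N, ξ i = 1)
    (D' : Matrix (Idx N) (Idx N) ℝ)
    (hD' : D' = D - Matrix.vecMulVec (D.mulVec ξ) fun _ => 1)
    (s : ℂ) (hs : ∀ j : Idx N, s ≠ ((j.1 : ℤ) : ℂ)) :
    Matrix.det ((D'.map fun x : ℝ => (x : ℂ)) - s • (1 : Matrix (Idx N) (Idx N) ℂ)) =
        -s * (∏ i : Idx N, (((i.1 : ℤ) : ℂ) - s)) * ∑ j : Idx N, (ξ j : ℂ) / (((j.1 : ℤ) : ℂ) - s) ∧
      (Matrix.det ((D'.map fun x : ℝ => (x : ℂ)) - s • (1 : Matrix (Idx N) (Idx N) ℂ)) = 0 ↔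
        ∑ j : Idx N, (ξ j : ℂ) / (s - ((j.1 : ℤ) : ℂ)) = 0) := by
  subst hD hD'
  have hcast : ((Matrix.diagonal fun i : Idx N => ((i.1 : ℤ) : ℝ)) -
      Matrix.vecMulVec ((Matrix.diagonal fun i : Idx N => ((i.1 : ℤ) : ℝ)).mulVec ξ) (fun _ => 1)).map
        (fun x : ℝ => (x : ℂ)) =
      Matrix.diagonal (fun i : Idx N => ((i.1 : ℤ) : ℂ)) -
        Matrix.vecMulVec ((Matrix.diagonal fun i : Idx N => ((i.1 : ℤ) : ℂ)).mulVec fun i => (ξ i : ℂ))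
          (fun _ => 1) := by
    ext i j
    by_cases h : i = j <;> simp [h, Matrix.vecMulVec_apply, Matrix.mulVec_diagonal]
  have hdet := Matrix.det_diagonal_sub_vecMulVec_sub_smul_one _ (fun i => (ξ i : ℂ))
    (by exact_mod_cast hnorm) s fun i => (hs i).symm
  rw [hcast]
  refine ⟨hdet, ?_⟩
  have hs0 : s ≠ 0 := by simpa using hs ⟨0, by simp⟩
  have hprod : ∏ i : Idx N, (((i.1 : ℤ) : ℂ) - s) ≠ 0 :=
    Finset.prod_ne_zero_iff.mpr fun i _ => sub_ne_zero.mpr (hs i).symm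
  have hflip : ∑ j : Idx N, (ξ j : ℂ) / (s - ((j.1 : ℤ) : ℂ)) =
      -∑ j : Idx N, (ξ j : ℂ) / (((j.1 : ℤ) : ℂ) - s) := by
    rw [← Finset.sum_neg_distrib]
    exact Finset.sum_congr rfl fun j _ => by rw [← div_neg, neg_sub]
  rw [hdet, hflip, neg_eq_zero]
  simp only [mul_eq_zero, neg_eq_zero, hs0, hprod, false_or]

/-- With `Q` of the standard form, `Q` PSD, `Qξ = 0`, `γξ = ξ`,
`⟨ξ, η⟩ = 1`, and `D' = D - |Dξ⟩⟨η|`, for every `s ∈ ℂ \ {-N, …, N}` one has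
`det(D' - s·Id) = -s ∏_i (i - s) ∑_j ξ_j/(j - s)`; in particular `det(D' - s·Id) = 0`
iff `∑_j ξ_j/(s - j) = 0`. -/
theorem stmt12 (N : ℕ) (a b : Idx N → ℝ)
    (ha : ∀ i, a (negIdx i) = a i) (hb : ∀ i, b (negIdx i) = -b i)
    (Q : Matrix (Idx N) (Idx N) ℝ)
    (hQdiag : ∀ i, Q i i = a i)
    (hQoff : ∀ i j, i ≠ j → Q i j = (b i - b j) / ((i.1 - j.1 : ℤ) : ℝ))
    (hpsd : Q.PosSemidef)
    (D : Matrix (Idx N) (Idx N) ℝ)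
    (hD : D = Matrix.diagonal fun i => ((i.1 : ℤ) : ℝ))
    (ξ : Idx N → ℝ) (hker : Q.mulVec ξ = 0)
    (heven : ∀ i, ξ (negIdx i) = ξ i)
    (hnorm : ∑ i : Idx N, ξ i = 1)
    (D' : Matrix (Idx N) (Idx N) ℝ)
    (hD' : D' = D - Matrix.vecMulVec (D.mulVec ξ) fun _ => 1)
    (s : ℂ) (hs : ∀ j : Idx N, s ≠ ((j.1 : ℤ) : ℂ)) :
    Matrix.det ((D'.map fun x : ℝ => (x : ℂ)) - s • (1 : Matrix (Idx N) (Idx N) ℂ)) =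
        -s * (∏ i : Idx N, (((i.1 : ℤ) : ℂ) - s)) * ∑ j : Idx N, (ξ j : ℂ) / (((j.1 : ℤ) : ℂ) - s) ∧
      (Matrix.det ((D'.map fun x : ℝ => (x : ℂ)) - s • (1 : Matrix (Idx N) (Idx N) ℂ)) = 0 ↔
        ∑ j : Idx N, (ξ j : ℂ) / (s - ((j.1 : ℤ) : ℂ)) = 0) :=
  stmt12_general N D hD ξ hnorm D' hD' s hs
end

section
/- Let N ∈ ℕ and let Q = (q_{i,j}), i, j ∈ {−N, …, N}, be the real matrix with q_{i,i} = a_i and q_{i,j} = (b_i − b_j)/(i − j) for i ≠ j, where a_{−i} = a_i and b_{−i} = −b_i. Let γ(e_j) = e_{−j}, D(e_j) = j·e_j, η = Σ_j e_j. Assume Q is positive semidefinite, Qξ = 0, γξ = ξ, ⟨ξ, η⟩ = 1, and set D' := D − |Dξ⟩⟨η|. Then det(D') = 0, and for every j ∈ {−N, …, N} with j ≠ 0 one has det(D' − j·Id) = 0 if and only if ξ_j = 0. -/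
namespace Matrix

variable {ι R : Type*} [Fintype ι] [DecidableEq ι] [CommRing R]

theorem diagonal_sub_vecMulVec_one_mulVec (e u v : ι → R) (i : ι) :
    ((diagonal e - vecMulVec u fun _ => 1) *ᵥ v) i = e i * v i - u i * ∑ k, v k := by
  rw [sub_mulVec, Pi.sub_apply, mulVec_diagonal]
  simp [vecMulVec, mulVec, dotProduct, Finset.mul_sum]

variable [IsDomain R]

theorem det_diagonal_sub_vecMulVec_diagonal_mulVec_eq_zero (d ξ : ι → R)
    (hξ : ∑ i, ξ i = 1) :
    det (diagonal d - vecMulVec (diagonal d *ᵥ ξ) fun _ => 1) = 0 := by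
  refine exists_mulVec_eq_zero_iff.mp ⟨ξ, fun h => by simp [h] at hξ, funext fun i => ?_⟩
  simp [diagonal_sub_vecMulVec_one_mulVec, mulVec_diagonal, hξ]

theorem det_diagonal_sub_vecMulVec_one_eq_zero_iff {e u : ι → R} {j : ι} (hej : e j = 0)
    (he : ∀ i, i ≠ j → e i ≠ 0) :
    det (diagonal e - vecMulVec u fun _ => 1) = 0 ↔ u j = 0 := by
  refine ⟨fun hdet => ?_, fun huj => det_eq_zero_of_row_eq_zero j fun k => ?_⟩
  · obtain ⟨v, hv, hker⟩ := exists_mulVec_eq_zero_iff.mpr hdet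
    have hrow : ∀ i, e i * v i = u i * ∑ k, v k := fun i => by
      simpa [diagonal_sub_vecMulVec_one_mulVec, sub_eq_zero] using congrFun hker i
    have hsum : ∑ k, v k ≠ 0 := by
      intro hsum
      have hoff : ∀ i, i ≠ j → v i = 0 := fun i hij => by
        simpa [hsum, he i hij] using hrow i
      refine hv (funext fun i => ?_)
      rcases eq_or_ne i j with rfl | hij
      · rwa [Finset.sum_eq_single i (fun k _ hk => hoff k hk) (by simp)] at hsum
      · exact hoff i hij
    simpa [hej, hsum, eq_comm] using hrow j
  · simp [vecMulVec, hej, huj, diagonal_apply]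

end Matrix

theorem stmt13_general (N : ℕ)
    (D : Matrix (Idx N) (Idx N) ℝ)
    (hD : D = Matrix.diagonal fun i => ((i.1 : ℤ) : ℝ))
    (ξ : Idx N → ℝ)
    (hnorm : ∑ i : Idx N, ξ i = 1)
    (D' : Matrix (Idx N) (Idx N) ℝ)
    (hD' : D' = D - Matrix.vecMulVec (D.mulVec ξ) fun _ => 1) :
    Matrix.det D' = 0 ∧
      ∀ j : Idx N, j.1 ≠ 0 →
        (Matrix.det (D' - (((j.1 : ℤ) : ℝ)) • (1 : Matrix (Idx N) (Idx N) ℝ)) = 0 ↔ ξ j = 0) := by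
  subst hD hD'
  set d : Idx N → ℝ := fun i => ((i.1 : ℤ) : ℝ)
  refine ⟨Matrix.det_diagonal_sub_vecMulVec_diagonal_mulVec_eq_zero d ξ hnorm, fun j hj => ?_⟩
  have hshift : ∀ u : Idx N → ℝ, Matrix.diagonal d - Matrix.vecMulVec u (fun _ => 1) - d j • 1
      = Matrix.diagonal (fun i => d i - d j) - Matrix.vecMulVec u fun _ => 1 := fun u => by
    rw [sub_right_comm, Matrix.smul_one_eq_diagonal, Matrix.diagonal_sub]
  have hd_inj : ∀ i, i ≠ j → d i - d j ≠ 0 := fun i hij =>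
    sub_ne_zero.mpr (Int.cast_injective.ne (Subtype.coe_injective.ne hij))
  rw [hshift, Matrix.det_diagonal_sub_vecMulVec_one_eq_zero_iff (sub_self _) hd_inj,
    Matrix.mulVec_diagonal, mul_eq_zero, or_iff_right (Int.cast_ne_zero.mpr hj)]

/-- With `Q` of the standard form, `Q` PSD, `Qξ = 0`, `γξ = ξ`,
`⟨ξ, η⟩ = 1`, and `D' = D - |Dξ⟩⟨η|`, one has `det D' = 0`, and for every
`j ∈ {-N, …, N}` with `j ≠ 0`: `det(D' - j·Id) = 0` iff `ξ_j = 0`. -/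
theorem stmt13 (N : ℕ) (a b : Idx N → ℝ)
    (ha : ∀ i, a (negIdx i) = a i) (hb : ∀ i, b (negIdx i) = -b i)
    (Q : Matrix (Idx N) (Idx N) ℝ)
    (hQdiag : ∀ i, Q i i = a i)
    (hQoff : ∀ i j, i ≠ j → Q i j = (b i - b j) / ((i.1 - j.1 : ℤ) : ℝ))
    (hpsd : Q.PosSemidef)
    (D : Matrix (Idx N) (Idx N) ℝ)
    (hD : D = Matrix.diagonal fun i => ((i.1 : ℤ) : ℝ))
    (ξ : Idx N → ℝ) (hker : Q.mulVec ξ = 0)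
    (heven : ∀ i, ξ (negIdx i) = ξ i)
    (hnorm : ∑ i : Idx N, ξ i = 1)
    (D' : Matrix (Idx N) (Idx N) ℝ)
    (hD' : D' = D - Matrix.vecMulVec (D.mulVec ξ) fun _ => 1) :
    Matrix.det D' = 0 ∧
      ∀ j : Idx N, j.1 ≠ 0 →
        (Matrix.det (D' - (((j.1 : ℤ) : ℝ)) • (1 : Matrix (Idx N) (Idx N) ℝ)) = 0 ↔ ξ j = 0) :=
  stmt13_general N D hD ξ hnorm D' hD'
end

section
/- Let N ∈ ℕ and let Q = (q_{i,j}), i, j ∈ {−N, …, N}, be a real symmetric positive semidefinite matrix of the form q_{i,i} = a_i, q_{i,j} = (b_i − b_j)/(i − j) for i ≠ j, with a_{−i} = a_i and b_{−i} = −b_i. Assume the kernel of Q is one-dimensional and invariant under the map γ sending the j-th coordinate to the (−j)-th coordinate, with γξ = ξ for ξ ∈ ker Q. Then for any nonzero ξ ∈ ker Q, all complex roots of the polynomial P(s) = Σ_{k=−N}^{N} ξ_k · ∏_{j≠k, −N≤j≤N} (j − s) are real. -/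
open scoped Matrix
open Matrix Finset Function

variable {ι : Type*}

/-- Division-free form of `Q i j = (b i - b j) / (x i - x j)`; the diagonal is unconstrained. -/
def Matrix.IsLoewner {R : Type*} [Ring R] (x b : ι → R) (Q : Matrix ι ι R) : Prop :=
  ∀ i j, (x i - x j) * Q i j = b i - b j

namespace Matrix.IsLoewner

theorem of_offDiag {K : Type*} [Field K] {x b : ι → K} {Q : Matrix ι ι K} (hx : Injective x)
    (hQ : ∀ i j, i ≠ j → Q i j = (b i - b j) / (x i - x j)) : IsLoewner x b Q := by
  intro i j
  rcases eq_or_ne i j with rfl | hij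
  · simp
  · rw [hQ i j hij, mul_div_cancel₀ _ (sub_ne_zero.mpr (hx.ne hij))]

section Ring

variable {R S : Type*} [Ring R] [Ring S] {x b : ι → R} {Q : Matrix ι ι R}

theorem map (h : IsLoewner x b Q) (f : R →+* S) : IsLoewner (f ∘ x) (f ∘ b) (Q.map f) := by
  intro i j
  simpa using congrArg f (h i j)

theorem sub_const (h : IsLoewner x b Q) (s : R) : IsLoewner (fun i => x i - s) b Q := by
  intro i j
  simpa using h i j

end Ring

theorem mul_mulVec_apply [Fintype ι] {R : Type*} [CommRing R] {x b : ι → R} {Q : Matrix ι ι R}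
    (h : IsLoewner x b Q) (w : ι → R) (i : ι) :
    x i * (Q *ᵥ w) i = b i * ∑ j, w j - ∑ j, b j * w j + (Q *ᵥ (x * w)) i := by
  simp only [mulVec, dotProduct, mul_sum, ← sum_sub_distrib, ← sum_add_distrib, Pi.mul_apply]
  refine sum_congr rfl fun j _ => ?_
  linear_combination w j * h i j

end Matrix.IsLoewner

variable [Fintype ι]

theorem Finset.sum_mul_prod_erase_eq [DecidableEq ι] {K : Type*} [Field K] (ξ c : ι → K)
    (hc : ∀ k, c k ≠ 0) :
    ∑ k, ξ k * ∏ j ∈ univ.erase k, c j = (∏ j, c j) * ∑ k, ξ k / c k := by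
  rw [mul_sum]
  refine sum_congr rfl fun k _ => ?_
  rw [← mul_prod_erase univ c (mem_univ k)]
  field_simp [hc k]

theorem sum_div_ne_zero_of_div_eq_mul {K : Type*} [Field K] {c ξ : ι → K} (hc : Injective c)
    (hc0 : ∀ k, c k ≠ 0) (hξ : ξ ≠ 0) {μ : K} (h : ∀ k, ξ k / c k = μ * ξ k) :
    ∑ k, ξ k / c k ≠ 0 := by
  classical
  obtain ⟨k, hk⟩ := Function.ne_iff.mp hξ
  have hμ : μ = (c k)⁻¹ := by
    have hk' := h k
    rw [div_eq_inv_mul] at hk'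
    exact (mul_right_cancel₀ hk hk').symm
  have hsupp : ∀ j ≠ k, ξ j = 0 := by
    intro j hjk
    by_contra hj
    have hj' := h j
    rw [div_eq_inv_mul, hμ] at hj'
    exact hjk (hc (inv_injective (mul_right_cancel₀ hj hj')))
  rw [sum_eq_single k (fun j _ hjk => by simp [hsupp j hjk]) (by simp)]
  exact div_ne_zero hk (hc0 k)

theorem sum_div_normSq_eq_zero_of_sum_div_eq_zero {x ξ : ι → ℝ} {s : ℂ} (hs : s.im ≠ 0)
    (h : ∑ k, (ξ k : ℂ) / (x k - s) = 0) :
    ∑ k, ξ k / Complex.normSq (x k - s) = 0 := by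
  have him := congrArg Complex.im h
  simp only [Complex.im_sum, Complex.div_im, Complex.ofReal_im, Complex.ofReal_re, Complex.sub_im,
    Complex.sub_re, zero_mul, zero_div, zero_sub, Complex.zero_im] at him
  have hmul : s.im * ∑ k, ξ k / Complex.normSq (x k - s) = 0 := by
    rw [← him, mul_sum]
    refine sum_congr rfl fun k _ => ?_
    ring
  exact (mul_eq_zero.mp hmul).resolve_left hs

theorem Matrix.re_star_dotProduct_map_ofReal_mulVec (Q : Matrix ι ι ℝ) (u : ι → ℂ) :
    (star u ⬝ᵥ Q.map (↑) *ᵥ u).re =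
      (fun i => (u i).re) ⬝ᵥ Q *ᵥ (fun i => (u i).re) +
        (fun i => (u i).im) ⬝ᵥ Q *ᵥ (fun i => (u i).im) := by
  simp only [dotProduct, mulVec, Complex.re_sum, mul_sum, ← sum_add_distrib]
  refine sum_congr rfl fun i _ => sum_congr rfl fun j _ => ?_
  simp [Complex.mul_re, Complex.mul_im]

theorem Matrix.PosSemidef.mulVec_re_eq_zero_and_mulVec_im_eq_zero {Q : Matrix ι ι ℝ}
    (hQ : Q.PosSemidef) {u : ι → ℂ} (h : star u ⬝ᵥ Q.map (↑) *ᵥ u = 0) :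
    Q *ᵥ (fun i => (u i).re) = 0 ∧ Q *ᵥ (fun i => (u i).im) = 0 := by
  have hsum := congrArg Complex.re h
  rw [re_star_dotProduct_map_ofReal_mulVec, Complex.zero_re] at hsum
  have hre := hQ.dotProduct_mulVec_nonneg fun i => (u i).re
  have him := hQ.dotProduct_mulVec_nonneg fun i => (u i).im
  simp only [star_trivial] at hre him
  constructor
  · exact (hQ.dotProduct_mulVec_zero_iff _).mp (by simp only [star_trivial]; linarith)
  · exact (hQ.dotProduct_mulVec_zero_iff _).mp (by simp only [star_trivial]; linarith)

theorem Matrix.exists_smul_eq_of_finrank_ker_eq_one {K : Type*} [Field K] {Q : Matrix ι ι K}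
    (h : Module.finrank K (LinearMap.ker Q.mulVecLin) = 1) {ξ v : ι → K} (hξ : ξ ≠ 0)
    (hQξ : Q *ᵥ ξ = 0) (hQv : Q *ᵥ v = 0) : ∃ α : K, α • ξ = v := by
  obtain ⟨α, hα⟩ := (finrank_eq_one_iff_of_nonzero' (⟨ξ, hQξ⟩ : LinearMap.ker Q.mulVecLin)
    fun h0 => hξ (congrArg Subtype.val h0)).mp h ⟨v, hQv⟩
  exact ⟨α, congrArg Subtype.val hα⟩

theorem Matrix.IsLoewner.sum_div_sub_ne_zero {x b : ι → ℝ} {Q : Matrix ι ι ℝ}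
    (hQ : IsLoewner x b Q) (hx : Injective x) (hpsd : Q.PosSemidef)
    (hker : Module.finrank ℝ (LinearMap.ker Q.mulVecLin) = 1) {ξ : ι → ℝ} (hξ : ξ ≠ 0)
    (hQξ : Q *ᵥ ξ = 0) {s : ℂ} (hs : s.im ≠ 0) :
    ∑ k, (ξ k : ℂ) / (x k - s) ≠ 0 := by
  intro hsum
  set c : ι → ℂ := fun k => x k - s with hc
  set u : ι → ℂ := fun k => ξ k / c k with hu
  have hc0 : ∀ k, c k ≠ 0 := fun k h => hs (by simpa [hc] using congrArg Complex.im h)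
  have hQc : IsLoewner c (fun k => (b k : ℂ)) (Q.map (↑)) :=
    (hQ.map Complex.ofRealHom).sub_const s
  have hcu : c * u = Complex.ofRealHom ∘ ξ := funext fun k => mul_div_cancel₀ _ (hc0 k)
  have hQu : ∀ i, (Q.map (↑) *ᵥ u) i = -(∑ j, b j * u j) / c i := by
    intro i
    have hQξc : (Q.map (↑) *ᵥ Complex.ofRealHom ∘ ξ) i = 0 :=
      (RingHom.map_mulVec Complex.ofRealHom Q ξ i).symm.trans (by simp [hQξ])
    rw [eq_div_iff (hc0 i), mul_comm, hQc.mul_mulVec_apply, hcu]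
    simp [hsum, hQξc]
  have hform : star u ⬝ᵥ Q.map (↑) *ᵥ u = 0 :=
    calc star u ⬝ᵥ Q.map (↑) *ᵥ u = ∑ i, star (u i) * (-(∑ j, b j * u j) / c i) := by
          simp only [dotProduct, hQu, Pi.star_apply]
      _ = -(∑ j, b j * u j) * ↑(∑ i, ξ i / Complex.normSq (c i)) := by
          push_cast
          rw [mul_sum]
          refine sum_congr rfl fun i _ => ?_
          rw [Complex.normSq_eq_conj_mul_self, hu]
          simp only [star_div₀, Complex.star_def, Complex.conj_ofReal]
          field_simp
      _ = 0 := by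
          rw [sum_div_normSq_eq_zero_of_sum_div_eq_zero hs hsum, Complex.ofReal_zero, mul_zero]
  obtain ⟨hre, him⟩ := hpsd.mulVec_re_eq_zero_and_mulVec_im_eq_zero hform
  obtain ⟨α, hα⟩ := exists_smul_eq_of_finrank_ker_eq_one hker hξ hQξ hre
  obtain ⟨β, hβ⟩ := exists_smul_eq_of_finrank_ker_eq_one hker hξ hQξ him
  refine sum_div_ne_zero_of_div_eq_mul (μ := α + β * Complex.I) ?_ hc0 ?_ ?_ hsum
  · exact fun i j h => hx (by simpa [hc] using h)
  · exact fun h => hξ (funext fun k => by simpa using congrFun h k)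
  · intro k
    have hαk : α * ξ k = (u k).re := congrFun hα k
    have hβk : β * ξ k = (u k).im := congrFun hβ k
    rw [← Complex.re_add_im (ξ k / c k), ← hαk, ← hβk]
    push_cast
    ring

theorem stmt14_general (N : ℕ) (b : Idx N → ℝ)
    (Q : Matrix (Idx N) (Idx N) ℝ)
    (hQoff : ∀ i j, i ≠ j → Q i j = (b i - b j) / ((i.1 - j.1 : ℤ) : ℝ))
    (hpsd : Q.PosSemidef)
    (hker1 : Module.finrank ℝ (LinearMap.ker Q.mulVecLin) = 1)
    (ξ : Idx N → ℝ) (hξ : ξ ≠ 0) (hkerξ : Q.mulVec ξ = 0) :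
    ∀ s : ℂ,
      (∑ k : Idx N, (ξ k : ℂ) *
          ∏ j ∈ Finset.univ.erase k, (((j.1 : ℤ) : ℂ) - s)) = 0 → s.im = 0 := by
  intro s hP
  by_contra hs
  set x : Idx N → ℝ := fun k => ((k.1 : ℤ) : ℝ)
  have hx : Injective x := fun i j h => Subtype.ext (Int.cast_injective h)
  have hQ : IsLoewner x b Q := IsLoewner.of_offDiag hx fun i j hij => by
    rw [hQoff i j hij]
    push_cast
    rfl
  have hc0 : ∀ k, (x k : ℂ) - s ≠ 0 := fun k h => hs (by simpa using congrArg Complex.im h)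
  refine hQ.sum_div_sub_ne_zero hx hpsd hker1 hξ hkerξ hs ?_
  have hP' : (∏ j, ((x j : ℂ) - s)) * ∑ k, (ξ k : ℂ) / (x k - s) = 0 := by
    rw [← sum_mul_prod_erase_eq _ _ hc0, ← hP]
    simp [x]
  exact (mul_eq_zero.mp hP').resolve_left (prod_ne_zero_iff.mpr fun k _ => hc0 k)

/-- Let `Q` be a real symmetric positive semidefinite matrix of the standard
form (`q_{i,i} = a_i`, `q_{i,j} = (b_i - b_j)/(i - j)`, `a` even, `b` odd), with
one-dimensional kernel all whose elements are even. Then for any nonzero `ξ ∈ ker Q`, all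
complex roots of `P(s) = ∑_k ξ_k ∏_{j ≠ k} (j - s)` are real. -/
theorem stmt14 (N : ℕ) (a b : Idx N → ℝ)
    (ha : ∀ i, a (negIdx i) = a i) (hb : ∀ i, b (negIdx i) = -b i)
    (Q : Matrix (Idx N) (Idx N) ℝ)
    (hQdiag : ∀ i, Q i i = a i)
    (hQoff : ∀ i j, i ≠ j → Q i j = (b i - b j) / ((i.1 - j.1 : ℤ) : ℝ))
    (hpsd : Q.PosSemidef)
    (hker1 : Module.finrank ℝ (LinearMap.ker Q.mulVecLin) = 1)
    (hkereven : ∀ v : Idx N → ℝ, Q.mulVec v = 0 → ∀ i, v (negIdx i) = v i)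
    (ξ : Idx N → ℝ) (hξ : ξ ≠ 0) (hkerξ : Q.mulVec ξ = 0) :
    ∀ s : ℂ,
      (∑ k : Idx N, (ξ k : ℂ) *
          ∏ j ∈ Finset.univ.erase k, (((j.1 : ℤ) : ℂ) - s)) = 0 → s.im = 0 :=
  stmt14_general N b Q hQoff hpsd hker1 ξ hξ hkerξ
end

section
/- Let N ∈ ℕ and let λ_{−N}, …, λ_N be distinct real numbers with λ_{−j} = −λ_j for all j. Let Q = (q_{i,j}), i, j ∈ {−N, …, N}, be a real symmetric positive semidefinite matrix of the form q_{i,i} = a_i, q_{i,j} = (b_i − b_j)/(λ_i − λ_j) for i ≠ j, with b_{−i} = −b_i, and assume the kernel of Q is one-dimensional and even (every ξ ∈ ker Q satisfies ξ_{−j} = ξ_j). Then for any nonzero ξ ∈ ker Q, all complex roots of the polynomial P(s) = Σ_{k=−N}^{N} ξ_k · ∏_{j≠k, −N≤j≤N} (λ_j − s) are real. -/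
open Finset Matrix

theorem Complex.ofReal_ne_of_im_ne_zero {x : ℝ} {s : ℂ} (hs : s.im ≠ 0) : (x : ℂ) ≠ s :=
  fun h => hs (by simp [← h])

theorem sum_mul_prod_erase_sub {K ι : Type*} [Field K] [Fintype ι] [DecidableEq ι]
    (lam ξ : ι → K) {s : K} (hs : ∀ j, lam j ≠ s) :
    ∑ k, ξ k * ∏ j ∈ univ.erase k, (lam j - s)
      = (∏ j, (lam j - s)) * ∑ k, ξ k / (lam k - s) := by
  rw [mul_sum]
  refine sum_congr rfl fun k _ => ?_
  rw [← mul_prod_erase univ _ (mem_univ k)]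
  field_simp [sub_ne_zero.2 (hs k)]

theorem sub_mul_mulVec_div_sub {K ι : Type*} [Field K] [Fintype ι] {lam b ξ : ι → K}
    {Q : Matrix ι ι K} (hlam : Function.Injective lam)
    (hQ : ∀ i j, i ≠ j → Q i j = (b i - b j) / (lam i - lam j)) {s : K} (hs : ∀ j, lam j ≠ s)
    (i : ι) :
    (lam i - s) * (Q *ᵥ fun j => ξ j / (lam j - s)) i
      = (Q *ᵥ ξ) i + b i * ∑ j, ξ j / (lam j - s) - ∑ j, b j * (ξ j / (lam j - s)) := by
  have hterm : ∀ j, (lam i - s) * (Q i j * (ξ j / (lam j - s)))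
      = Q i j * ξ j + (b i - b j) * (ξ j / (lam j - s)) := by
    intro j
    have hj := sub_ne_zero.2 (hs j)
    obtain rfl | hij := eq_or_ne i j
    · field_simp; ring
    · rw [hQ i j hij]
      field_simp [sub_ne_zero.2 (hlam.ne hij)]
      ring
  simp only [mulVec, dotProduct, mul_sum, hterm, sum_add_distrib, sub_mul, sum_sub_distrib,
    add_sub_assoc]

theorem sum_conj_div_sub_mul_inv_eq_zero {ι : Type*} [Fintype ι] (lam ξ : ι → ℝ) {s : ℂ}
    (hs : s.im ≠ 0) (hsum : ∑ j, (ξ j : ℂ) / (lam j - s) = 0) :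
    ∑ j, star ((ξ j : ℂ) / (lam j - s)) * (lam j - s)⁻¹ = 0 := by
  have hconj : s - star s ≠ 0 := by
    rw [sub_ne_zero]; intro h; apply hs; simpa using (Complex.conj_eq_iff_im.mp h.symm)
  have hterm : ∀ j, star ((ξ j : ℂ) / (lam j - s)) * (lam j - s)⁻¹
      = ((ξ j : ℂ) / (lam j - s) - star ((ξ j : ℂ) / (lam j - s))) / (s - star s) := by
    intro j
    have h1 := sub_ne_zero.2 (Complex.ofReal_ne_of_im_ne_zero (x := lam j) hs)
    have h2 := sub_ne_zero.2 (Complex.ofReal_ne_of_im_ne_zero (x := lam j)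
      (s := star s) (by simpa using hs))
    simp only [star_div₀, star_sub, Complex.star_def, Complex.conj_ofReal] at *
    field_simp
    ring
  rw [sum_congr rfl fun j _ => hterm j, ← sum_div, sum_sub_distrib, ← star_sum, hsum]
  simp

namespace Matrix

variable {ι : Type*} [Fintype ι] (Q : Matrix ι ι ℝ)

theorem re_map_ofReal_mulVec (u : ι → ℂ) (i : ι) :
    ((Q.map (↑) *ᵥ u) i).re = (Q *ᵥ fun j => (u j).re) i := by
  simp [mulVec, dotProduct, Complex.re_sum]

theorem im_map_ofReal_mulVec (u : ι → ℂ) (i : ι) :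
    ((Q.map (↑) *ᵥ u) i).im = (Q *ᵥ fun j => (u j).im) i := by
  simp [mulVec, dotProduct, Complex.im_sum]

theorem re_star_dotProduct_map_ofReal_mulVec_s16 (u : ι → ℂ) :
    (star u ⬝ᵥ Q.map (↑) *ᵥ u).re
      = (fun j => (u j).re) ⬝ᵥ Q *ᵥ (fun j => (u j).re)
        + (fun j => (u j).im) ⬝ᵥ Q *ᵥ (fun j => (u j).im) := by
  simp only [dotProduct, Complex.re_sum, ← sum_add_distrib, Pi.star_apply, Complex.mul_re,
    Complex.star_def, Complex.conj_re, Complex.conj_im, re_map_ofReal_mulVec,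
    im_map_ofReal_mulVec]
  ring_nf

variable {Q}

theorem PosSemidef.map_ofReal_mulVec_eq_zero (hQ : Q.PosSemidef) {u : ι → ℂ}
    (hu : star u ⬝ᵥ Q.map (↑) *ᵥ u = 0) : Q.map (↑) *ᵥ u = 0 := by
  have hre := congrArg Complex.re hu
  rw [re_star_dotProduct_map_ofReal_mulVec_s16, Complex.zero_re] at hre
  have hx := hQ.dotProduct_mulVec_nonneg fun j => (u j).re
  have hy := hQ.dotProduct_mulVec_nonneg fun j => (u j).im
  simp only [star_trivial] at hx hy
  have hQx := (hQ.dotProduct_mulVec_zero_iff fun j => (u j).re).1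
    (by rw [star_trivial]; linarith)
  have hQy := (hQ.dotProduct_mulVec_zero_iff fun j => (u j).im).1
    (by rw [star_trivial]; linarith)
  funext i
  apply Complex.ext
  · rw [re_map_ofReal_mulVec, hQx]; rfl
  · rw [im_map_ofReal_mulVec, hQy]; rfl

theorem exists_eq_mul_of_map_ofReal_mulVec_eq_zero
    (hker : Module.finrank ℝ (LinearMap.ker Q.mulVecLin) = 1) {ξ : ι → ℝ} (hξ : ξ ≠ 0)
    (hQξ : Q *ᵥ ξ = 0) {u : ι → ℂ} (hu : Q.map (↑) *ᵥ u = 0) :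
    ∃ c : ℂ, ∀ j, u j = c * ξ j := by
  have hspan : LinearMap.ker Q.mulVecLin = Submodule.span ℝ {ξ} :=
    (Submodule.eq_of_le_of_finrank_le
      (Submodule.span_singleton_le_iff_mem _ _ |>.2 hQξ)
      (by rw [finrank_span_singleton hξ, hker])).symm
  have hmem : ∀ v, Q *ᵥ v = 0 → ∃ α : ℝ, α • ξ = v := fun v hv =>
    Submodule.mem_span_singleton.1 (hspan ▸ hv)
  obtain ⟨α, hα⟩ := hmem (fun j => (u j).re) (funext fun i => by
    rw [← re_map_ofReal_mulVec, hu]; rfl)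
  obtain ⟨β, hβ⟩ := hmem (fun j => (u j).im) (funext fun i => by
    rw [← im_map_ofReal_mulVec, hu]; rfl)
  refine ⟨α + β * Complex.I, fun j => ?_⟩
  apply Complex.ext <;> simp [← congrFun hα j, ← congrFun hβ j]

end Matrix

theorem sum_div_sub_ne_zero_of_forall_div_sub_eq_mul {K ι : Type*} [Field K] [Fintype ι]
    {lam ξ : ι → K} (hlam : Function.Injective lam) {k : ι} (hk : ξ k ≠ 0) {s : K}
    (hs : ∀ j, lam j ≠ s) {c : K} (hc : ∀ j, ξ j / (lam j - s) = c * ξ j) :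
    ∑ j, ξ j / (lam j - s) ≠ 0 := by
  have hsupp : ∀ j, ξ j ≠ 0 → j = k := by
    have hinv : ∀ j, ξ j ≠ 0 → (lam j - s)⁻¹ = c := fun j hj =>
      mul_right_cancel₀ hj (by rw [← div_eq_inv_mul, hc])
    intro j hj
    exact hlam (by simpa using (hinv j hj).trans (hinv k hk).symm)
  rw [sum_eq_single k (fun j _ hjk => by rw [not_imp_comm.1 (hsupp j) hjk, zero_div])
    (fun h => absurd (mem_univ k) h)]
  exact div_ne_zero hk (sub_ne_zero.2 (hs k))

theorem stmt16_general (N : ℕ) (lam : Idx N → ℝ)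
    (hlaminj : Function.Injective lam)
    (b : Idx N → ℝ)
    (Q : Matrix (Idx N) (Idx N) ℝ)
    (hQoff : ∀ i j, i ≠ j → Q i j = (b i - b j) / (lam i - lam j))
    (hpsd : Q.PosSemidef)
    (hker1 : Module.finrank ℝ (LinearMap.ker Q.mulVecLin) = 1)
    (ξ : Idx N → ℝ) (hξ : ξ ≠ 0) (hkerξ : Q.mulVec ξ = 0) :
    ∀ s : ℂ,
      (∑ k : Idx N, (ξ k : ℂ) *
          ∏ j ∈ Finset.univ.erase k, ((lam j : ℂ) - s)) = 0 → s.im = 0 := by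
  intro s hP
  by_contra hs
  have hne : ∀ j, (lam j : ℂ) ≠ s := fun j => Complex.ofReal_ne_of_im_ne_zero hs
  have hlamc : Function.Injective fun j => (lam j : ℂ) := Complex.ofReal_injective.comp hlaminj
  set u : Idx N → ℂ := fun j => (ξ j : ℂ) / (lam j - s)
  have hsum : ∑ j, u j = 0 := by
    rw [sum_mul_prod_erase_sub _ _ hne] at hP
    exact (mul_eq_zero.1 hP).resolve_left (prod_ne_zero_iff.2 fun j _ => sub_ne_zero.2 (hne j))
  have hQc : ∀ i j, i ≠ j → Q.map (↑) i j = ((b i : ℂ) - b j) / (lam i - lam j) := by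
    intro i j hij
    simp [hQoff i j hij]
  have hQξ : Q.map (↑) *ᵥ (fun j => (ξ j : ℂ)) = 0 := by
    funext i
    exact (RingHom.map_mulVec Complex.ofRealHom Q ξ i).symm.trans (by simp [hkerξ])
  set G := ∑ j, (b j : ℂ) * u j
  have hQu : ∀ i, (Q.map (↑) *ᵥ u) i = -G * (lam i - s)⁻¹ := by
    intro i
    have := sub_mul_mulVec_div_sub hlamc hQc hne i (ξ := fun j => (ξ j : ℂ))
    rw [hQξ, hsum, Pi.zero_apply, mul_zero, zero_add] at this
    field_simp [sub_ne_zero.2 (hne i)]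
    linear_combination this
  have hquad : star u ⬝ᵥ Q.map (↑) *ᵥ u = 0 := by
    simp only [dotProduct, hQu, Pi.star_apply, mul_left_comm _ (-G), ← mul_sum]
    exact mul_eq_zero_of_right _ (sum_conj_div_sub_mul_inv_eq_zero lam ξ hs hsum)
  obtain ⟨c, hc⟩ := exists_eq_mul_of_map_ofReal_mulVec_eq_zero hker1 hξ hkerξ
    (hpsd.map_ofReal_mulVec_eq_zero hquad)
  obtain ⟨k, hk⟩ := Function.ne_iff.1 hξ
  exact sum_div_sub_ne_zero_of_forall_div_sub_eq_mul hlamc (Complex.ofReal_ne_zero.2 hk) hne hc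
    hsum

/-- Let `λ_{-N}, …, λ_N` be distinct real numbers with `λ_{-j} = -λ_j`, and
`Q` a real symmetric positive semidefinite matrix with `q_{i,i} = a_i`,
`q_{i,j} = (b_i - b_j)/(λ_i - λ_j)` for `i ≠ j` (`b` odd), with one-dimensional, even kernel.
Then for any nonzero `ξ ∈ ker Q`, all complex roots of
`P(s) = ∑_k ξ_k ∏_{j ≠ k} (λ_j - s)` are real. -/
theorem stmt16 (N : ℕ) (lam : Idx N → ℝ)
    (hlaminj : Function.Injective lam)
    (hlamodd : ∀ j, lam (negIdx j) = -lam j)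
    (a b : Idx N → ℝ) (hb : ∀ i, b (negIdx i) = -b i)
    (Q : Matrix (Idx N) (Idx N) ℝ)
    (hQdiag : ∀ i, Q i i = a i)
    (hQoff : ∀ i j, i ≠ j → Q i j = (b i - b j) / (lam i - lam j))
    (hpsd : Q.PosSemidef)
    (hker1 : Module.finrank ℝ (LinearMap.ker Q.mulVecLin) = 1)
    (hkereven : ∀ v : Idx N → ℝ, Q.mulVec v = 0 → ∀ i, v (negIdx i) = v i)
    (ξ : Idx N → ℝ) (hξ : ξ ≠ 0) (hkerξ : Q.mulVec ξ = 0) :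
    ∀ s : ℂ,
      (∑ k : Idx N, (ξ k : ℂ) *
          ∏ j ∈ Finset.univ.erase k, ((lam j : ℂ) - s)) = 0 → s.im = 0 :=
  stmt16_general N lam hlaminj b Q hQoff hpsd hker1 ξ hξ hkerξ
end

section
/- Let N ∈ ℕ, let λ_{−N}, …, λ_N be distinct real numbers with λ_{−j} = −λ_j, and let D be the diagonal matrix with D e_j = λ_j e_j, indexed by j ∈ {−N, …, N}. Let Q = (q_{i,j}) be the real matrix with q_{i,i} = a_i, q_{i,j} = (b_i − b_j)/(λ_i − λ_j) for i ≠ j, where a_{−i} = a_i and b_{−i} = −b_i. Assume Q is positive semidefinite, Qξ = 0, ξ_{−j} = ξ_j for all j, and ⟨ξ, η⟩ = 1 where η = Σ_j e_j. Set D' := D − |Dξ⟩⟨η|. Then for every s ∈ ℂ with s ∉ {λ_{−N}, …, λ_N} and s ≠ 0: det(D' − s·Id) = 0 if and only if Σ_{j=−N}^{N} ξ_j / (s − λ_j) = 0. Moreover det(D') = 0, and for λ_j ≠ 0 one has det(D' − λ_j·Id) = 0 if and only if ξ_j = 0. -/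
open Matrix Finset

namespace Matrix

variable {n K : Type*} [DecidableEq n]

theorem diagonal_sub_vecMulVec_sub_smul_one [CommRing K] (d u v : n → K) (s : K) :
    diagonal d - vecMulVec u v - s • (1 : Matrix n n K) =
      diagonal (fun i => d i - s) - vecMulVec u v := by
  rw [smul_one_eq_diagonal, sub_right_comm, diagonal_sub]

theorem map_diagonal_sub_vecMulVec {R S : Type*} [CommRing R] [CommRing S] (f : R →+* S)
    (d u v : n → R) :
    (diagonal d - vecMulVec u v).map f =
      diagonal (fun i => f (d i)) - vecMulVec (fun i => f (u i)) fun i => f (v i) := by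
  ext i j
  simp [diagonal_apply, vecMulVec, apply_ite f]

variable [Fintype n] [Field K]

theorem det_diagonal_sub_vecMulVec_mul_eq_zero (μ ξ v : n → K) (hξ : v ⬝ᵥ ξ = 1) :
    (diagonal μ - vecMulVec (fun i => μ i * ξ i) v).det = 0 := by
  refine exists_mulVec_eq_zero_iff.mp ⟨ξ, fun h => by simp [h] at hξ, ?_⟩
  ext i
  simp [sub_mulVec, mulVec_diagonal, vecMulVec_mulVec, hξ]

theorem det_diagonal_sub_vecMulVec_of_ne_zero (μ u v : n → K) (hμ : ∀ i, μ i ≠ 0) :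
    (diagonal μ - vecMulVec u v).det = (∏ i, μ i) * (1 - ∑ i, u i * v i / μ i) := by
  have hdet : IsUnit (diagonal μ).det := by
    rw [det_diagonal]; exact (prod_ne_zero_iff.mpr fun i _ => hμ i).isUnit
  have hinv : (diagonal μ)⁻¹ = diagonal fun i => (μ i)⁻¹ := by
    refine inv_eq_left_inv ?_
    rw [diagonal_mul_diagonal, ← diagonal_one]
    exact congrArg diagonal (funext fun i => inv_mul_cancel₀ (hμ i))
  rw [sub_eq_add_neg, ← neg_vecMulVec, vecMulVec_eq Unit,
    det_add_replicateCol_mul_replicateRow hdet, det_diagonal, det_unique, hinv]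
  congr 1
  simp [Matrix.mul_apply, replicateRow, replicateCol, diagonal_apply, sub_eq_add_neg]
  exact sum_congr rfl fun i _ => by ring

open Polynomial in
theorem det_diagonal_sub_vecMulVec [Infinite K] (μ u v : n → K) :
    (diagonal μ - vecMulVec u v).det = ∏ i, μ i - ∑ i, u i * v i * ∏ k ∈ univ.erase i, μ k := by
  -- Both sides are polynomial in a shift `t` of `μ`, and agree whenever all `μ i + t ≠ 0`.
  set P : K[X] :=
    (diagonal (fun i => C (μ i) + X) - vecMulVec (fun i => C (u i)) fun i => C (v i)).det
  set R : K[X] := ∏ i, (C (μ i) + X) - ∑ i, C (u i * v i) * ∏ k ∈ univ.erase i, (C (μ k) + X)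
  have hP : ∀ t, P.eval t = (diagonal (fun i => μ i + t) - vecMulVec u v).det := by
    intro t
    simp only [P, ← coe_evalRingHom, RingHom.map_det]
    congr 1
    ext i j
    simp [diagonal, vecMulVec, apply_ite]
  have hPR : P = R := by
    apply eq_of_infinite_eval_eq
    refine ((Set.finite_range fun i => -μ i).infinite_compl).mono fun t ht => ?_
    have hne : ∀ i, μ i + t ≠ 0 := fun i h => ht ⟨i, by linear_combination -h⟩
    have hprod : ∀ i, (∏ k, (μ k + t)) * (u i * v i / (μ i + t)) =
        u i * v i * ∏ k ∈ univ.erase i, (μ k + t) := by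
      intro i
      rw [← mul_prod_erase _ _ (mem_univ i)]
      field_simp [hne i]
    simp [hP, det_diagonal_sub_vecMulVec_of_ne_zero _ _ _ hne, R, eval_prod, eval_finsetSum,
      mul_sub, mul_sum, hprod]
  simpa [hP, R, eval_prod, eval_finsetSum] using congrArg (Polynomial.eval 0) hPR

theorem det_diagonal_sub_vecMulVec_of_eq_zero [Infinite K] (μ u v : n → K) {j : n}
    (hj : μ j = 0) :
    (diagonal μ - vecMulVec u v).det = -(u j * v j * ∏ k ∈ univ.erase j, μ k) := by
  have hvanish : ∀ i ∈ univ, i ≠ j → u i * v i * ∏ k ∈ univ.erase i, μ k = 0 := fun i _ hij => by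
    rw [prod_eq_zero (mem_erase.mpr ⟨Ne.symm hij, mem_univ j⟩) hj, mul_zero]
  rw [det_diagonal_sub_vecMulVec, prod_eq_zero (mem_univ j) hj, zero_sub,
    sum_eq_single j hvanish fun h => (h (mem_univ j)).elim]

end Matrix

theorem one_sub_sum_mul_div_sub_eq_mul_sum_div {n K : Type*} [Fintype n] [Field K]
    (d ξ : n → K) {s : K} (hs : ∀ i, d i ≠ s) (hξ : ∑ i, ξ i = 1) :
    1 - ∑ i, d i * ξ i / (d i - s) = s * ∑ i, ξ i / (s - d i) := by
  rw [← hξ, mul_sum, ← sum_sub_distrib]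
  refine sum_congr rfl fun i _ => ?_
  have h1 : d i - s ≠ 0 := sub_ne_zero.mpr (hs i)
  have h2 : s - d i ≠ 0 := sub_ne_zero.mpr (hs i).symm
  field_simp
  ring

theorem stmt17_general (N : ℕ) (lam : Idx N → ℝ)
    (hlaminj : Function.Injective lam)
    (D : Matrix (Idx N) (Idx N) ℝ) (hD : D = Matrix.diagonal lam)
    (ξ : Idx N → ℝ)
    (hnorm : ∑ i : Idx N, ξ i = 1)
    (D' : Matrix (Idx N) (Idx N) ℝ)
    (hD' : D' = D - Matrix.vecMulVec (D.mulVec ξ) fun _ => 1) :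
    (∀ s : ℂ, (∀ j : Idx N, s ≠ (lam j : ℂ)) → s ≠ 0 →
      (Matrix.det ((D'.map fun x : ℝ => (x : ℂ)) - s • (1 : Matrix (Idx N) (Idx N) ℂ)) = 0 ↔
        ∑ j : Idx N, (ξ j : ℂ) / (s - (lam j : ℂ)) = 0)) ∧
    Matrix.det D' = 0 ∧
    ∀ j : Idx N, lam j ≠ 0 →
      (Matrix.det (D' - lam j • (1 : Matrix (Idx N) (Idx N) ℝ)) = 0 ↔ ξ j = 0) := by
  have hDξ : D.mulVec ξ = fun i => lam i * ξ i := by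
    ext i; rw [hD, mulVec_diagonal]
  rw [hDξ, hD] at hD'
  subst hD'
  refine ⟨fun s hs hs0 => ?_, ?_, fun j hj => ?_⟩
  · have hsub : ∀ i, (lam i : ℂ) - s ≠ 0 := fun i => sub_ne_zero.mpr (hs i).symm
    have hnormC : ∑ i, (ξ i : ℂ) = 1 := by exact_mod_cast hnorm
    rw [show (fun x : ℝ => (x : ℂ)) = Complex.ofRealHom from rfl, map_diagonal_sub_vecMulVec,
      diagonal_sub_vecMulVec_sub_smul_one]
    simp only [Complex.ofRealHom_eq_coe, Complex.ofReal_mul, Complex.ofReal_one]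
    rw [det_diagonal_sub_vecMulVec_of_ne_zero _ _ _ hsub]
    simp only [mul_one]
    rw [one_sub_sum_mul_div_sub_eq_mul_sum_div _ _ (fun i => (hs i).symm) hnormC]
    simp [prod_ne_zero_iff, hsub, hs0]
  · exact det_diagonal_sub_vecMulVec_mul_eq_zero _ _ _ (by simpa [dotProduct] using hnorm)
  · rw [diagonal_sub_vecMulVec_sub_smul_one,
      det_diagonal_sub_vecMulVec_of_eq_zero (fun i => lam i - lam j) _ _ (sub_self (lam j))]
    simp [prod_ne_zero_iff, hj, sub_eq_zero, hlaminj.ne_iff]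

/-- With distinct `λ_j` (`λ_{-j} = -λ_j`), `D = diag(λ_j)`, `Q` of the
standard form, `Q` PSD, `Qξ = 0`, `ξ` even, `⟨ξ, η⟩ = 1`, and `D' = D - |Dξ⟩⟨η|`:
for every `s ∈ ℂ` with `s ∉ {λ_j}` and `s ≠ 0`, `det(D' - s·Id) = 0` iff
`∑_j ξ_j/(s - λ_j) = 0`; moreover `det D' = 0`, and for `λ_j ≠ 0`,
`det(D' - λ_j·Id) = 0` iff `ξ_j = 0`. -/
theorem stmt17 (N : ℕ) (lam : Idx N → ℝ)
    (hlaminj : Function.Injective lam)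
    (hlamodd : ∀ j, lam (negIdx j) = -lam j)
    (D : Matrix (Idx N) (Idx N) ℝ) (hD : D = Matrix.diagonal lam)
    (a b : Idx N → ℝ) (ha : ∀ i, a (negIdx i) = a i) (hb : ∀ i, b (negIdx i) = -b i)
    (Q : Matrix (Idx N) (Idx N) ℝ)
    (hQdiag : ∀ i, Q i i = a i)
    (hQoff : ∀ i j, i ≠ j → Q i j = (b i - b j) / (lam i - lam j))
    (hpsd : Q.PosSemidef)
    (ξ : Idx N → ℝ) (hker : Q.mulVec ξ = 0)
    (heven : ∀ i, ξ (negIdx i) = ξ i)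
    (hnorm : ∑ i : Idx N, ξ i = 1)
    (D' : Matrix (Idx N) (Idx N) ℝ)
    (hD' : D' = D - Matrix.vecMulVec (D.mulVec ξ) fun _ => 1) :
    (∀ s : ℂ, (∀ j : Idx N, s ≠ (lam j : ℂ)) → s ≠ 0 →
      (Matrix.det ((D'.map fun x : ℝ => (x : ℂ)) - s • (1 : Matrix (Idx N) (Idx N) ℂ)) = 0 ↔
        ∑ j : Idx N, (ξ j : ℂ) / (s - (lam j : ℂ)) = 0)) ∧
    Matrix.det D' = 0 ∧
    ∀ j : Idx N, lam j ≠ 0 →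
      (Matrix.det (D' - lam j • (1 : Matrix (Idx N) (Idx N) ℝ)) = 0 ↔ ξ j = 0) :=
  stmt17_general N lam hlaminj D hD ξ hnorm D' hD'
end

section
/- Let a, b, c, d be real numbers and let M be the 3×3 real symmetric matrix with rows (d, b, b), (b, c, b), (b, b, d), indexed by n, m ∈ {−1, 0, 1} (this is the general form of the matrix q_{n,m} arising from any real distribution on [0,1]). Let λ be the largest (respectively, the smallest) eigenvalue of M and assume its eigenspace is one-dimensional, spanned by ξ = (ξ_{−1}, ξ_0, ξ_1). Define ξ(x) := ξ_{−1} e^{−2πix} + ξ_0 + ξ_1 e^{2πix} for x ∈ [0, 1] and ξ(x) = 0 for x ∉ [0, 1]. Then every z ∈ ℂ with ξ̂(z) = 0 is real, where ξ̂(z) = ∫_0^1 ξ(x) e^{−izx} dx. -/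
/-!
Integrating term by term, `ξ̂(z) = (e^{-iz} - 1) / i · ∑ₖ ξₖ / (2πk - z)`, and for non-real `z` the
factor `e^{-iz} - 1` does not vanish, so `∑ₖ ξₖ / (2πk - z) = 0`. The matrix commutes with the
reversal `(v₋₁, v₀, v₁) ↦ (v₁, v₀, v₋₁)`, so the simple eigenvector `ξ` is symmetric or
antisymmetric. An antisymmetric `ξ` cannot satisfy the equation; a symmetric `ξ = (p, q, p)` turns
it into `(2p + q) z² = 4π² q`, which has only real roots when `q (q + 2p) ≥ 0`. This sign is where
extremality enters: the eigen-equation gives `b² q (q + 2p) = (λ - d - b) (λ - d + b) p²`, and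
`λ - d - b`, `λ - d + b` have the same sign because `d - b` and `c + d + b - λ` are eigenvalues too.
-/

section

open Complex Real

theorem integral_exp_two_pi_I_int_mul_exp (k : ℤ) {z : ℂ} (hz : z.im ≠ 0) :
    ∫ x in (0 : ℝ)..1, cexp (2 * π * I * k * x) * cexp (-I * z * x)
      = (cexp (-I * z) - 1) / (I * (2 * π * k - z)) := by
  set c : ℂ := I * (2 * π * k - z)
  have hc : c ≠ 0 := fun h => hz (by simpa [c] using congrArg re h)
  have hexp : cexp c = cexp (-I * z) := by
    rw [show c = k * (2 * π * I) + -I * z by ring, Complex.exp_add, exp_int_mul_two_pi_mul_I,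
      one_mul]
  simp_rw [← Complex.exp_add, show ∀ x : ℂ, 2 * π * I * k * x + -I * z * x = c * x by
    intro x; ring]
  rw [integral_exp_mul_complex hc]
  simp [hexp]

theorem integral_trigPoly_mul_exp {z : ℂ} (hz : z.im ≠ 0) (u v w : ℂ) :
    ∫ x in Set.Icc (0 : ℝ) 1,
        (u * cexp (-(2 * π * I) * x) + v + w * cexp (2 * π * I * x)) * cexp (-I * z * x)
      = (cexp (-I * z) - 1) / I * (u / (-2 * π - z) + v / -z + w / (2 * π - z)) := by
  have mode (k : ℤ) : IntervalIntegrable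
      (fun x : ℝ => cexp (2 * π * I * k * x) * cexp (-I * z * x)) MeasureTheory.volume 0 1 :=
    (by fun_prop : Continuous _).intervalIntegrable _ _
  rw [MeasureTheory.integral_Icc_eq_integral_Ioc, ← intervalIntegral.integral_of_le zero_le_one]
  have h := congrArg₂ (· + ·) (congrArg₂ (· + ·)
    (congrArg (u * ·) (integral_exp_two_pi_I_int_mul_exp (-1) hz))
    (congrArg (v * ·) (integral_exp_two_pi_I_int_mul_exp 0 hz)))
    (congrArg (w * ·) (integral_exp_two_pi_I_int_mul_exp 1 hz))
  simp only [← intervalIntegral.integral_const_mul] at h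
  rw [← intervalIntegral.integral_add ((mode _).const_mul _) ((mode _).const_mul _),
    ← intervalIntegral.integral_add (((mode _).const_mul _).add ((mode _).const_mul _))
      ((mode _).const_mul _)] at h
  convert h using 1
  · congr 1; ext x; push_cast; simp only [mul_zero, zero_mul, Complex.exp_zero]; ring_nf
  · push_cast; field_simp; ring

theorem trigPoly_eq_of_integral_mul_exp_eq_zero {z : ℂ} (hz : z.im ≠ 0) {u v w : ℂ}
    (h : ∫ x in Set.Icc (0 : ℝ) 1,
        (u * cexp (-(2 * π * I) * x) + v + w * cexp (2 * π * I * x)) * cexp (-I * z * x) = 0) :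
    u * z * (2 * π - z) + v * (4 * π ^ 2 - z ^ 2) - w * z * (2 * π + z) = 0 := by
  have hexp : cexp (-I * z) - 1 ≠ 0 := by
    refine sub_ne_zero.mpr fun h1 => hz ?_
    simpa [Complex.norm_exp] using congrArg norm h1
  have hm : -(2 * π : ℂ) - z ≠ 0 := fun h => hz (by simpa using congrArg im h)
  have h0 : z ≠ 0 := by rintro rfl; simp at hz
  have hp : (2 * π : ℂ) - z ≠ 0 := fun h => hz (by simpa using congrArg im h)
  rw [integral_trigPoly_mul_exp hz, mul_eq_zero, or_iff_right (div_ne_zero hexp I_ne_zero)] at h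
  field_simp at h
  linear_combination h

theorem Complex.im_eq_zero_of_mul_sq_eq {z : ℂ} {α β : ℝ} (hα : α ≠ 0) (hαβ : 0 ≤ α * β)
    (h : (α : ℂ) * z ^ 2 = β) : z.im = 0 := by
  have hre := congrArg re h
  have him := congrArg im h
  simp only [sq, mul_re, mul_im, ofReal_re, ofReal_im] at hre him
  by_contra hne
  have hzre : z.re = 0 := by
    have : α * (2 * z.im) * z.re = 0 := by linarith
    simpa [hα, hne] using this
  have : α * β = -(α ^ 2 * z.im ^ 2) := by rw [← hre, hzre]; ring
  have : 0 < α ^ 2 * z.im ^ 2 := by positivity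
  linarith

theorem im_eq_zero_of_trigPoly_symm {z : ℂ} {p q : ℝ} (hpq : ¬(p = 0 ∧ q = 0))
    (hsign : 0 ≤ q * (q + 2 * p))
    (h : p * z * (2 * π - z) + q * (4 * π ^ 2 - z ^ 2) - p * z * (2 * π + z) = 0) :
    z.im = 0 := by
  have hq : ((2 * p + q : ℝ) : ℂ) * z ^ 2 = (4 * π ^ 2 * q : ℝ) := by
    push_cast
    linear_combination -h
  refine im_eq_zero_of_mul_sq_eq (fun hα => hpq ?_) ?_ hq
  · have hq0 : q = 0 := by
      have : ((4 * π ^ 2 * q : ℝ) : ℂ) = 0 := by rw [← hq, hα]; simp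
      simpa [pi_ne_zero] using this
    exact ⟨by linarith, hq0⟩
  · nlinarith [mul_nonneg (sq_nonneg π) hsign]

theorem eq_zero_of_trigPoly_antisymm {z : ℂ} (hz : z.im ≠ 0) {u : ℂ}
    (h : u * z * (2 * π - z) + 0 * (4 * π ^ 2 - z ^ 2) - -u * z * (2 * π + z) = 0) : u = 0 := by
  have h4 : u * (4 * π * z) = 0 := by linear_combination h
  refine (mul_eq_zero.mp h4).resolve_right fun h4 => hz ?_
  simp only [mul_eq_zero, OfNat.ofNat_ne_zero, ofReal_eq_zero, pi_ne_zero, or_self,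
    false_or] at h4
  simp [h4]

end

def qMatrix (b c d : ℝ) : Matrix (Fin 3) (Fin 3) ℝ :=
  Matrix.of ![![d, b, b], ![b, c, b], ![b, b, d]]

namespace qMatrix

variable {b c d : ℝ}

theorem mulVec_eq_smul_iff {μ : ℝ} {v : Fin 3 → ℝ} :
    (qMatrix b c d).mulVec v = μ • v ↔
      d * v 0 + b * v 1 + b * v 2 = μ * v 0 ∧ b * v 0 + c * v 1 + b * v 2 = μ * v 1 ∧
        b * v 0 + b * v 1 + d * v 2 = μ * v 2 := by
  simp [funext_iff, Fin.forall_fin_succ, qMatrix, dotProduct, Fin.sum_univ_three]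

theorem eigenvector_symm_or_antisymm {lam : ℝ} {ξ : Fin 3 → ℝ}
    (heig : (qMatrix b c d).mulVec ξ = lam • ξ)
    (hsimple : ∀ v : Fin 3 → ℝ, (qMatrix b c d).mulVec v = lam • v → ∃ t : ℝ, v = t • ξ) :
    ξ 2 = ξ 0 ∨ ξ 2 = -ξ 0 ∧ ξ 1 = 0 := by
  obtain ⟨e0, e1, e2⟩ := mulVec_eq_smul_iff.mp heig
  obtain ⟨t, ht⟩ := hsimple ![ξ 2, ξ 1, ξ 0] <| mulVec_eq_smul_iff.mpr <| by
    simp only [Matrix.cons_val]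
    exact ⟨by linarith, by linarith, by linarith⟩
  have h0 : ξ 2 = t * ξ 0 := by simpa using congrFun ht 0
  have h1 : ξ 1 = t * ξ 1 := by simpa using congrFun ht 1
  have h2 : ξ 0 = t * ξ 2 := by simpa using congrFun ht 2
  by_cases ht1 : t = -1
  · subst ht1
    exact Or.inr ⟨by linarith, by linarith⟩
  · refine Or.inl (mul_left_cancel₀ (sub_ne_zero.mpr ht1) ?_)
    linear_combination h0 - h2

theorem sub_mul_sub_nonneg_of_extremal {lam : ℝ} (hb : b ≠ 0)
    (hchar : (lam - c) * (lam - d - b) = 2 * b ^ 2)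
    (hext : (∀ μ : ℝ, (∃ v : Fin 3 → ℝ, v ≠ 0 ∧ (qMatrix b c d).mulVec v = μ • v) → μ ≤ lam) ∨
      (∀ μ : ℝ, (∃ v : Fin 3 → ℝ, v ≠ 0 ∧ (qMatrix b c d).mulVec v = μ • v) → lam ≤ μ)) :
    0 ≤ (lam - d - b) * (lam - d + b) := by
  have hanti : ∃ v : Fin 3 → ℝ, v ≠ 0 ∧ (qMatrix b c d).mulVec v = (d - b) • v :=
    ⟨![1, 0, -1], fun h => by simpa using congrFun h 0,
      mulVec_eq_smul_iff.mpr (by simp only [Matrix.cons_val]; exact ⟨by ring, by ring, by ring⟩)⟩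
  -- on symmetric vectors `M` acts by `!![d + b, b; 2 * b, c]`, whose eigenvalues sum to `c + d + b`
  have hsymm : ∃ v : Fin 3 → ℝ, v ≠ 0 ∧ (qMatrix b c d).mulVec v = (c + d + b - lam) • v :=
    ⟨![b, c - lam, b], fun h => hb (by simpa using congrFun h 0),
      mulVec_eq_smul_iff.mpr (by
        simp only [Matrix.cons_val]
        exact ⟨by ring, by linear_combination -hchar, by ring⟩)⟩
  have hb2 : 0 < b ^ 2 := by positivity
  rcases hext with hmax | hmin
  · have h1 := hmax _ hanti
    have h2 := hmax _ hsymm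
    have hy : 0 ≤ lam - d - b := by
      by_contra! hy
      nlinarith [mul_neg_of_pos_of_neg (by linarith : 0 < lam - c) hy]
    exact mul_nonneg hy (by linarith)
  · have h1 := hmin _ hanti
    have h2 := hmin _ hsymm
    have hy : lam - d - b ≤ 0 := by
      by_contra! hy
      nlinarith [mul_neg_of_neg_of_pos (by linarith : lam - c < 0) hy]
    exact mul_nonneg_of_nonpos_of_nonpos hy (by linarith)

theorem mul_add_two_mul_nonneg_of_extremal {lam : ℝ} {ξ : Fin 3 → ℝ}
    (hext : (∀ μ : ℝ, (∃ v : Fin 3 → ℝ, v ≠ 0 ∧ (qMatrix b c d).mulVec v = μ • v) → μ ≤ lam) ∨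
      (∀ μ : ℝ, (∃ v : Fin 3 → ℝ, v ≠ 0 ∧ (qMatrix b c d).mulVec v = μ • v) → lam ≤ μ))
    (heig : (qMatrix b c d).mulVec ξ = lam • ξ)
    (hsimple : ∀ v : Fin 3 → ℝ, (qMatrix b c d).mulVec v = lam • v → ∃ t : ℝ, v = t • ξ)
    (hsym : ξ 2 = ξ 0) :
    0 ≤ ξ 1 * (ξ 1 + 2 * ξ 0) := by
  obtain ⟨e0, e1, -⟩ := mulVec_eq_smul_iff.mp heig
  rw [hsym] at e0 e1
  rcases eq_or_ne (ξ 0) 0 with h0 | h0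
  · rw [h0]
    nlinarith [sq_nonneg (ξ 1)]
  by_cases hb : b = 0
  · subst hb
    rcases eq_or_ne (ξ 1) 0 with h1 | h1
    · simp [h1]
    -- otherwise `M = lam • 1`, whose eigenspace is not a line
    have hd : d = lam := mul_right_cancel₀ h0 (by linarith)
    have hc : c = lam := mul_right_cancel₀ h1 (by linarith)
    obtain ⟨s, hs⟩ := hsimple ![1, 0, 0] (mulVec_eq_smul_iff.mpr (by simp [hd]))
    have hs0 : 1 = s * ξ 0 := by simpa using congrFun hs 0
    have hs1 : 0 = s * ξ 1 := by simpa using congrFun hs 1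
    rcases mul_eq_zero.mp hs1.symm with rfl | h
    · simp at hs0
    · exact absurd h h1
  have hq : b * ξ 1 = (lam - d - b) * ξ 0 := by linarith
  have hchar : (lam - c) * (lam - d - b) = 2 * b ^ 2 := by
    refine mul_right_cancel₀ h0 ?_
    linear_combination -(lam - c) * hq - b * e1
  have hkey : b ^ 2 * (ξ 1 * (ξ 1 + 2 * ξ 0)) = (lam - d - b) * (lam - d + b) * ξ 0 ^ 2 := by
    linear_combination (b * ξ 1 + (lam - d + b) * ξ 0) * hq
  refine nonneg_of_mul_nonneg_right ?_ (by positivity : 0 < b ^ 2)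
  rw [hkey]
  exact mul_nonneg (sub_mul_sub_nonneg_of_extremal hb hchar hext) (sq_nonneg _)

end qMatrix

/-- Let `M` be the `3×3` real symmetric matrix with rows `(d, b, b)`,
`(b, c, b)`, `(b, b, d)` (indexed by `{-1, 0, 1}`; this is the general form of the truncated
quadratic form of a real distribution on `[0,1]` for `N = 1`). If `λ` is the largest
(respectively smallest) eigenvalue of `M`, its eigenspace is one-dimensional and spanned by
`ξ = (ξ_{-1}, ξ_0, ξ_1)`, and `ξ(x) = ξ_{-1} e^{-2πix} + ξ_0 + ξ_1 e^{2πix}` on `[0, 1]`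
(extended by zero), then every zero of `ξ̂(z) = ∫_0^1 ξ(x) e^{-izx} dx` is real. -/
theorem stmt19 (b c d : ℝ)
    (M : Matrix (Fin 3) (Fin 3) ℝ)
    (hM : M = Matrix.of ![![d, b, b], ![b, c, b], ![b, b, d]])
    (lam : ℝ)
    (hext : (∀ μ : ℝ, (∃ v : Fin 3 → ℝ, v ≠ 0 ∧ M.mulVec v = μ • v) → μ ≤ lam) ∨
            (∀ μ : ℝ, (∃ v : Fin 3 → ℝ, v ≠ 0 ∧ M.mulVec v = μ • v) → lam ≤ μ))
    (ξ : Fin 3 → ℝ) (hξ : ξ ≠ 0) (heig : M.mulVec ξ = lam • ξ)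
    (hsimple : ∀ v : Fin 3 → ℝ, M.mulVec v = lam • v → ∃ t : ℝ, v = t • ξ)
    (z : ℂ)
    (hz : (∫ x in Set.Icc (0 : ℝ) 1,
        ((ξ 0 : ℂ) * Complex.exp (-(2 * Real.pi * Complex.I) * x) + (ξ 1 : ℂ) +
            (ξ 2 : ℂ) * Complex.exp (2 * Real.pi * Complex.I * x)) *
          Complex.exp (-Complex.I * z * x)) = 0) :
    z.im = 0 := by
  subst hM
  by_contra him
  have hpoly := trigPoly_eq_of_integral_mul_exp_eq_zero him hz
  rcases qMatrix.eigenvector_symm_or_antisymm heig hsimple with hsym | ⟨hanti, h1⟩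
  · rw [hsym] at hpoly
    refine him (im_eq_zero_of_trigPoly_symm (fun ⟨h0, h1⟩ => hξ ?_)
      (qMatrix.mul_add_two_mul_nonneg_of_extremal hext heig hsimple hsym) hpoly)
    ext i; fin_cases i <;> simp [*]
  · rw [hanti, h1, Complex.ofReal_neg, Complex.ofReal_zero] at hpoly
    have h0 : ξ 0 = 0 := Complex.ofReal_eq_zero.mp (eq_zero_of_trigPoly_antisymm him hpoly)
    exact hξ (by ext i; fin_cases i <;> simp [*])
end
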